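/- arXiv:2009.01688 — 10 statements merged into one kernel-verified Lean document; each statement's English description precedes it below -/
import Mathlib

section
/- For all real x with 0 < x < π/2, the following double inequality holds: (2 + cos x)/3 − (2/3 − 2/π)·Φ₁(x) < (sin x)/x < (2 + cos x)/3 − (2/3 − 2/π)·Φ₂(x). -/
/-!
Put `g x = (2 + cos x) / 3 - sin x / x`. Both bounds are equalities at `x = π / 2`, where
`Φ₁ = Φ₂ = 1` and `g = 2 / 3 - 2 / π`. Integrating `cos ≤ 1` repeatedly from `0` gives the
alternating Taylor bounds for `sin` and `cos` on `[0, ∞)`. On an initial segment (`x ≤ 5/4`,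
resp. `x ≤ 27/20`) they reduce each inequality to a polynomial one. On the rest of `(0, π / 2)`
they fix the sign of the derivative of the difference of the two sides; that difference is then
monotone and vanishes at `π / 2`.
-/

open Real Set Finset
open scoped Nat

noncomputable def sinTaylor (n : ℕ) (x : ℝ) : ℝ :=
  ∑ k ∈ range n, (-1) ^ k * x ^ (2 * k + 1) / (2 * k + 1)!

noncomputable def cosTaylor (n : ℕ) (x : ℝ) : ℝ :=
  ∑ k ∈ range n, (-1) ^ k * x ^ (2 * k) / (2 * k)!

theorem hasDerivAt_sinTaylor (n : ℕ) (x : ℝ) : HasDerivAt (sinTaylor n) (cosTaylor n x) x := by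
  unfold sinTaylor cosTaylor
  refine HasDerivAt.fun_sum fun k _ => ?_
  refine (((hasDerivAt_pow _ x).const_mul _).div_const _).congr_deriv ?_
  rw [Nat.factorial_succ]
  push_cast
  field_simp

theorem hasDerivAt_cosTaylor (n : ℕ) (x : ℝ) :
    HasDerivAt (cosTaylor (n + 1)) (-sinTaylor n x) x := by
  have h : cosTaylor (n + 1) =
      fun y => ∑ k ∈ range n, (-1 : ℝ) ^ (k + 1) * y ^ (2 * k + 2) / (2 * k + 2)! + 1 := by
    ext y
    simp [cosTaylor, sum_range_succ', mul_add]
  rw [h, sinTaylor, ← sum_neg_distrib]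
  refine (HasDerivAt.fun_sum fun k _ => ?_).add_const 1
  refine (((hasDerivAt_pow _ x).const_mul _).div_const _).congr_deriv ?_
  rw [Nat.factorial_succ]
  push_cast
  field_simp
  ring

theorem sinTaylor_zero_right (n : ℕ) : sinTaylor n 0 = 0 := by simp [sinTaylor]

theorem cosTaylor_succ_zero_right (n : ℕ) : cosTaylor (n + 1) 0 = 1 := by
  simp [cosTaylor, sum_range_succ']

theorem nonneg_of_hasDerivAt_nonneg {f f' : ℝ → ℝ} (hf : ∀ y, HasDerivAt f (f' y) y)
    (hf' : ∀ y, 0 ≤ y → 0 ≤ f' y) (h0 : f 0 = 0) {x : ℝ} (hx : 0 ≤ x) : 0 ≤ f x := by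
  have hmono := monotoneOn_of_hasDerivWithinAt_nonneg (convex_Ici 0)
    (fun y _ => (hf y).continuousAt.continuousWithinAt) (fun y _ => (hf y).hasDerivWithinAt)
    (fun y hy => hf' y (by rw [interior_Ici] at hy; exact hy.le))
  simpa [h0] using hmono self_mem_Ici hx hx

theorem sin_taylor_alternating_of_cos {n : ℕ}
    (hcos : ∀ y : ℝ, 0 ≤ y → 0 ≤ (-1) ^ (n + 1) * (cos y - cosTaylor (n + 1) y))
    {x : ℝ} (hx : 0 ≤ x) : 0 ≤ (-1) ^ (n + 1) * (sin x - sinTaylor (n + 1) x) :=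
  nonneg_of_hasDerivAt_nonneg (fun y => ((hasDerivAt_sin y).sub
    (hasDerivAt_sinTaylor (n + 1) y)).const_mul _) hcos (by simp [sinTaylor_zero_right]) hx

theorem cos_taylor_alternating (n : ℕ) {x : ℝ} (hx : 0 ≤ x) :
    0 ≤ (-1) ^ (n + 1) * (cos x - cosTaylor (n + 1) x) := by
  induction n generalizing x with
  | zero => simp [cosTaylor, cos_le_one]
  | succ n ih =>
    refine nonneg_of_hasDerivAt_nonneg
      (fun y => (((hasDerivAt_cos y).sub (hasDerivAt_cosTaylor (n + 1) y)).const_mul _).congr_deriv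
        (by ring)) (fun y hy => sin_taylor_alternating_of_cos (fun _ => ih) hy)
      (by simp [cosTaylor_succ_zero_right]) hx

theorem sin_taylor_alternating (n : ℕ) {x : ℝ} (hx : 0 ≤ x) :
    0 ≤ (-1) ^ (n + 1) * (sin x - sinTaylor (n + 1) x) :=
  sin_taylor_alternating_of_cos (fun _ => cos_taylor_alternating n) hx

theorem sin_le_sinTaylor (n : ℕ) {x : ℝ} (hx : 0 ≤ x) : sin x ≤ sinTaylor (2 * n + 1) x := by
  have h := sin_taylor_alternating (2 * n) hx
  rw [pow_succ, pow_mul] at h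
  norm_num at h
  linarith

theorem sinTaylor_le_sin (n : ℕ) {x : ℝ} (hx : 0 ≤ x) : sinTaylor (2 * n + 2) x ≤ sin x := by
  have h := sin_taylor_alternating (2 * n + 1) hx
  rw [pow_succ, pow_succ, pow_mul] at h
  norm_num at h
  linarith

theorem cos_le_cosTaylor (n : ℕ) {x : ℝ} (hx : 0 ≤ x) : cos x ≤ cosTaylor (2 * n + 1) x := by
  have h := cos_taylor_alternating (2 * n) hx
  rw [pow_succ, pow_mul] at h
  norm_num at h
  linarith

theorem cosTaylor_le_cos (n : ℕ) {x : ℝ} (hx : 0 ≤ x) : cosTaylor (2 * n + 2) x ≤ cos x := by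
  have h := cos_taylor_alternating (2 * n + 1) hx
  rw [pow_succ, pow_succ, pow_mul] at h
  norm_num at h
  linarith

theorem lt_of_hasDerivAt_lt_of_eq_right {f g f' g' : ℝ → ℝ} {a b x : ℝ}
    (hf : ∀ t ∈ Icc a b, HasDerivAt f (f' t) t) (hg : ∀ t ∈ Icc a b, HasDerivAt g (g' t) t)
    (hlt : ∀ t ∈ Ioo a b, f' t < g' t) (heq : f b = g b) (hx : x ∈ Ico a b) : g x < f x := by
  have hd : ∀ t ∈ Icc a b, HasDerivAt (fun s => g s - f s) (g' t - f' t) t :=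
    fun t ht => (hg t ht).sub (hf t ht)
  have hmono : StrictMonoOn (fun s => g s - f s) (Icc a b) :=
    strictMonoOn_of_hasDerivWithinAt_pos (convex_Icc a b)
      (fun t ht => (hd t ht).continuousAt.continuousWithinAt)
      (fun t ht => (hd t (interior_subset ht)).hasDerivWithinAt)
      (fun t ht => sub_pos.2 (hlt t (by rwa [interior_Icc] at ht)))
  have h := hmono ⟨hx.1, hx.2.le⟩ ⟨hx.1.trans hx.2.le, le_rfl⟩ hx.2
  simp only [heq, sub_self] at h
  linarith

noncomputable def cusaHuygensGap (x : ℝ) : ℝ := (2 + cos x) / 3 - sin x / x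

noncomputable def cusaHuygensGapDeriv (t : ℝ) : ℝ := -sin t / 3 - (t * cos t - sin t) / t ^ 2

theorem hasDerivAt_cusaHuygensGap {t : ℝ} (ht : t ≠ 0) :
    HasDerivAt cusaHuygensGap (cusaHuygensGapDeriv t) t := by
  refine ((((hasDerivAt_cos t).const_add 2).div_const 3).sub
    ((hasDerivAt_sin t).div (hasDerivAt_id t) ht)).congr_deriv ?_
  simp only [cusaHuygensGapDeriv, id]
  ring

theorem cusaHuygensGap_pi_div_two : cusaHuygensGap (π / 2) = 2 / 3 - 2 / π := by
  simp [cusaHuygensGap, div_div_eq_mul_div]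

theorem cusaHuygensGap_lt_of_le {x : ℝ} (h0 : 0 < x) (h1 : x ≤ 5 / 4) :
    cusaHuygensGap x < 329 / 6250 * (x - sin x) := by
  have hcos : cos x ≤ cosTaylor 5 x := cos_le_cosTaylor 2 h0.le
  have hsin : sinTaylor 4 x ≤ sin x := sinTaylor_le_sin 1 h0.le
  have hpoly : ((2 + cosTaylor 5 x) / 3 - 329 / 6250 * (x - sinTaylor 4 x)) * x
      - sinTaylor 4 x < 0 := by
    -- the left side is `-x ^ 4` times this quintic
    have hQ : 0 < 329/37500 - x/180 - 329/750000*x^2 + x^3/3780 + 47/4500000*x^4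
        - x^5/120960 := by
      nlinarith [mul_pos h0 h0, mul_nonneg (mul_nonneg h0.le h0.le) h0.le,
        mul_nonneg (sub_nonneg.2 h1) h0.le, mul_nonneg (mul_nonneg (sub_nonneg.2 h1) h0.le) h0.le,
        sq_nonneg (x - 5/4), pow_pos h0 4, pow_pos h0 5]
    simp only [sinTaylor, cosTaylor, sum_range_succ, sum_range_zero]
    norm_num [Nat.factorial]
    linarith [mul_pos (pow_pos h0 4) hQ]
  have key : ((2 + cos x) / 3 - 329 / 6250 * (x - sin x)) * x - sin x < 0 := by
    nlinarith [mul_le_mul_of_nonneg_left hcos h0.le,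
      mul_le_mul_of_nonneg_left hsin (by linarith : (0 : ℝ) ≤ 1 - 329 / 6250 * x)]
  rw [cusaHuygensGap, sub_lt_iff_lt_add', ← sub_lt_iff_lt_add, lt_div_iff₀ h0]
  linarith

theorem mul_sq_lt_cusaHuygensGap_of_le {x : ℝ} (h0 : 0 < x) (h1 : x ≤ 27 / 20) :
    9223 / 100000 * (x - sin x) ^ 2 < cusaHuygensGap x := by
  have hcos : cosTaylor 4 x ≤ cos x := cosTaylor_le_cos 1 h0.le
  have hsin : sin x ≤ sinTaylor 5 x := sin_le_sinTaylor 2 h0.le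
  have hsq : (x - sin x) ^ 2 ≤ (x - sinTaylor 4 x) ^ 2 :=
    pow_le_pow_left₀ (sub_nonneg.2 (sin_le h0.le)) (by linarith [sinTaylor_le_sin 1 h0.le]) 2
  have hpoly : 9223 / 100000 * (x - sinTaylor 4 x) ^ 2 * x + sinTaylor 5 x
      - (2 + cosTaylor 4 x) * x / 3 < 0 := by
    have hu0 : 0 < x ^ 2 := by positivity
    have hu1 : x ^ 2 ≤ 729 / 400 := by nlinarith
    -- the left side is `x ^ 5` times this polynomial in `x ^ 2`
    have hR : -1/180 + x^2/3780 + (x^2)^2/362880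
        + 9223/100000 * x^2 * (1/6 - x^2/120 + (x^2)^2/5040)^2 < 0 := by
      generalize x ^ 2 = u at hu0 hu1 ⊢
      nlinarith [mul_pos hu0 hu0, mul_nonneg (sub_nonneg.2 hu1) hu0.le,
        mul_nonneg (mul_nonneg (sub_nonneg.2 hu1) hu0.le) hu0.le,
        mul_nonneg (sub_nonneg.2 hu1) (sub_nonneg.2 hu1), pow_pos hu0 3, pow_pos hu0 4,
        pow_pos hu0 5]
    simp only [sinTaylor, cosTaylor, sum_range_succ, sum_range_zero]
    norm_num [Nat.factorial]
    linarith [mul_neg_of_pos_of_neg (pow_pos h0 5) hR]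
  have key : 9223 / 100000 * (x - sin x) ^ 2 * x + sin x - (2 + cos x) * x / 3 < 0 := by
    nlinarith [mul_le_mul_of_nonneg_right hsq h0.le]
  rw [cusaHuygensGap, lt_sub_comm, div_lt_iff₀ h0]
  linarith

theorem mul_one_sub_cos_lt_cusaHuygensGapDeriv {t : ℝ} (h1 : 5 / 4 ≤ t)
    (h2 : t ≤ 15708 / 10000) : 1053 / 20000 * (1 - cos t) < cusaHuygensGapDeriv t := by
  have ht : 0 < t := by linarith
  have hcos : cos t ≤ cosTaylor 5 t := cos_le_cosTaylor 2 ht.le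
  have hsin : sinTaylor 4 t ≤ sin t := sinTaylor_le_sin 1 ht.le
  have hpoly : 1053 / 20000 * (1 - cosTaylor 5 t) * t ^ 2 + (t ^ 2 / 3 - 1) * sinTaylor 4 t
      + t * cosTaylor 5 t < 0 := by
    -- the left side is `t ^ 4` times this sextic
    have hQ : 1053/40000 - t/45 - 351/160000*t^2 + t^3/630 + 117/1600000*t^4 - t^5/24192
        - 1053/806400000*t^6 < 0 := by
      nlinarith [mul_nonneg (sub_nonneg.2 h1) (sub_nonneg.2 h2),
        mul_nonneg (mul_nonneg (sub_nonneg.2 h1) (sub_nonneg.2 h2)) (sub_nonneg.2 h1),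
        mul_nonneg (mul_nonneg (sub_nonneg.2 h1) (sub_nonneg.2 h2)) (sub_nonneg.2 h2),
        sq_nonneg (t - 7/5), pow_pos ht 5, pow_pos ht 6]
    simp only [sinTaylor, cosTaylor, sum_range_succ, sum_range_zero]
    norm_num [Nat.factorial]
    linarith [mul_neg_of_pos_of_neg (pow_pos ht 4) hQ]
  have key : 1053 / 20000 * (1 - cos t) * t ^ 2 + (t ^ 2 / 3 - 1) * sin t + t * cos t < 0 := by
    nlinarith [mul_le_mul_of_nonneg_left hcos (by nlinarith : (0 : ℝ) ≤ t - 1053 / 20000 * t ^ 2),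
      mul_le_mul_of_nonpos_left hsin (by nlinarith : t ^ 2 / 3 - 1 ≤ 0)]
  have heq : cusaHuygensGapDeriv t = 1053 / 20000 * (1 - cos t)
      - (1053 / 20000 * (1 - cos t) * t ^ 2 + (t ^ 2 / 3 - 1) * sin t + t * cos t) / t ^ 2 := by
    rw [cusaHuygensGapDeriv]
    field_simp
    ring
  rw [heq]
  linarith [div_neg_of_neg_of_pos key (pow_pos ht 2)]

theorem cusaHuygensGapDeriv_lt_mul {t : ℝ} (h1 : 27 / 20 ≤ t) (h2 : t ≤ 15708 / 10000) :
    cusaHuygensGapDeriv t < 4611 / 50000 * (2 * (t - sin t) * (1 - cos t)) := by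
  have ht : 0 < t := by linarith
  have hsin : sin t ≤ sinTaylor 5 t := sin_le_sinTaylor 2 ht.le
  have hcos : cosTaylor 4 t ≤ cos t := cosTaylor_le_cos 1 ht.le
  have hS3 : 0 ≤ t - sinTaylor 3 t := by
    simp only [sinTaylor, sum_range_succ, sum_range_zero]
    norm_num [Nat.factorial]
    nlinarith [mul_nonneg (pow_pos ht 3).le (by nlinarith : (0 : ℝ) ≤ 20 - t ^ 2)]
  have hprod : (1 - cosTaylor 5 t) * (t - sinTaylor 3 t) ≤ (1 - cos t) * (t - sin t) :=
    mul_le_mul (by linarith [cos_le_cosTaylor 2 ht.le]) (by linarith [sin_le_sinTaylor 1 ht.le])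
      hS3 (by linarith [cos_le_one t])
  have hpoly : (1 - t ^ 2 / 3) * sinTaylor 5 t - t * cosTaylor 4 t
      < 2 * (4611 / 50000) * (t - sinTaylor 3 t) * (1 - cosTaylor 5 t) * t ^ 2 := by
    have hu1 : 729 / 400 ≤ t ^ 2 := by nlinarith
    have hu2 : t ^ 2 ≤ 24675 / 10000 := by nlinarith
    -- the difference of the two sides is `t ^ 5` times this polynomial in `t ^ 2`
    have hM : 0 < 2 * (4611/50000) * t^2 * (1/6 - t^2/120) * (1/2 - t^2/24 + (t^2)^2/720
        - (t^2)^3/40320) - 1/45 + t^2/630 - 5*(t^2)^2/72576 + (t^2)^3/1088640 := by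
      generalize t ^ 2 = u at hu1 hu2 ⊢
      nlinarith [mul_nonneg (sub_nonneg.2 hu1) (sub_nonneg.2 hu2),
        mul_nonneg (mul_nonneg (sub_nonneg.2 hu1) (sub_nonneg.2 hu2)) (sub_nonneg.2 hu1),
        mul_nonneg (mul_nonneg (sub_nonneg.2 hu1) (sub_nonneg.2 hu2)) (sub_nonneg.2 hu2),
        sq_nonneg (u - 2)]
    simp only [sinTaylor, cosTaylor, sum_range_succ, sum_range_zero]
    norm_num [Nat.factorial]
    linarith [mul_pos (pow_pos ht 5) hM]
  have key : (1 - t ^ 2 / 3) * sin t - t * cos t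
      < 4611 / 50000 * (2 * (t - sin t) * (1 - cos t)) * t ^ 2 := by
    nlinarith [mul_le_mul_of_nonneg_right hprod (sq_nonneg t),
      mul_le_mul_of_nonneg_left hsin (by nlinarith : (0 : ℝ) ≤ 1 - t ^ 2 / 3),
      mul_le_mul_of_nonneg_left hcos ht.le]
  have heq : cusaHuygensGapDeriv t = ((1 - t ^ 2 / 3) * sin t - t * cos t) / t ^ 2 := by
    rw [cusaHuygensGapDeriv]
    field_simp
    ring
  rw [heq, div_lt_iff₀ (pow_pos ht 2)]
  exact key

-- The coefficients are `0.0526406…` and `0.0922232…`, so the brackets need `π` to six digits.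
theorem phi_one_coeff_mem_Ioo :
    (2 / 3 - 2 / π) * (π / 2 - 1)⁻¹ ∈ Set.Ioo (329 / 6250) (1053 / 20000) := by
  have h1 := pi_gt_d6
  have h2 := pi_lt_d6
  have heq : (2 / 3 - 2 / π) * (π / 2 - 1)⁻¹ = 4 * (π - 3) / (3 * π * (π - 2)) := by
    have : π - 2 ≠ 0 := by linarith
    field_simp
    ring
  have hd : 0 < 3 * π * (π - 2) := by nlinarith
  rw [heq, Set.mem_Ioo, lt_div_iff₀ hd, div_lt_iff₀ hd]
  constructor <;> nlinarith

theorem phi_two_coeff_mem_Ioo :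
    (2 / 3 - 2 / π) * (π / 2 - 1)⁻¹ ^ 2 ∈ Set.Ioo (4611 / 50000) (9223 / 100000) := by
  have h1 := pi_gt_d6
  have h2 := pi_lt_d6
  have heq : (2 / 3 - 2 / π) * (π / 2 - 1)⁻¹ ^ 2 = 8 * (π - 3) / (3 * π * (π - 2) ^ 2) := by
    have : π - 2 ≠ 0 := by linarith
    field_simp
    ring
  have hd : 0 < 3 * π * (π - 2) ^ 2 := by nlinarith
  rw [heq, Set.mem_Ioo, lt_div_iff₀ hd, div_lt_iff₀ hd]
  constructor <;> nlinarith [mul_pos (sub_pos.2 h1) (sub_pos.2 h2)]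

theorem cusaHuygensGap_lt {x : ℝ} (hx : 0 < x) (hx' : x < π / 2) :
    cusaHuygensGap x < (2 / 3 - 2 / π) * ((π / 2 - 1)⁻¹ * (x - sin x)) := by
  obtain ⟨hq0, hq1⟩ := phi_one_coeff_mem_Ioo
  set q := (2 / 3 - 2 / π) * (π / 2 - 1)⁻¹ with hq
  rw [← mul_assoc, ← hq]
  rcases le_or_gt x (5 / 4) with hsmall | hlarge
  · calc cusaHuygensGap x < 329 / 6250 * (x - sin x) := cusaHuygensGap_lt_of_le hx hsmall
      _ ≤ q * (x - sin x) := by gcongr; linarith [sin_le hx.le]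
  · refine lt_of_hasDerivAt_lt_of_eq_right (f := fun t => q * (t - sin t))
      (f' := fun t => q * (1 - cos t))
      (fun t _ => ((hasDerivAt_id' t).sub (hasDerivAt_sin t)).const_mul q)
      (fun t ht => hasDerivAt_cusaHuygensGap (by linarith [ht.1]))
      (fun t ht => ?_) ?_ ⟨hlarge.le, hx'⟩
    · calc q * (1 - cos t) ≤ 1053 / 20000 * (1 - cos t) := by gcongr; linarith [cos_le_one t]
        _ < _ := mul_one_sub_cos_lt_cusaHuygensGapDeriv ht.1.le (by linarith [ht.2, pi_lt_d4])
    · have : π - 2 ≠ 0 := by linarith [pi_gt_three]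
      rw [cusaHuygensGap_pi_div_two, sin_pi_div_two, hq]
      field_simp

theorem mul_sq_lt_cusaHuygensGap {x : ℝ} (hx : 0 < x) (hx' : x < π / 2) :
    (2 / 3 - 2 / π) * ((π / 2 - 1)⁻¹ ^ 2 * (x - sin x) ^ 2) < cusaHuygensGap x := by
  obtain ⟨hr0, hr1⟩ := phi_two_coeff_mem_Ioo
  set r := (2 / 3 - 2 / π) * (π / 2 - 1)⁻¹ ^ 2 with hr
  rw [← mul_assoc, ← hr]
  rcases le_or_gt x (27 / 20) with hsmall | hlarge
  · calc r * (x - sin x) ^ 2 ≤ 9223 / 100000 * (x - sin x) ^ 2 := by gcongr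
      _ < cusaHuygensGap x := mul_sq_lt_cusaHuygensGap_of_le hx hsmall
  · refine lt_of_hasDerivAt_lt_of_eq_right (g := fun t => r * (t - sin t) ^ 2)
      (g' := fun t => r * (2 * (t - sin t) * (1 - cos t)))
      (fun t ht => hasDerivAt_cusaHuygensGap (by linarith [ht.1]))
      (fun t _ => ((((hasDerivAt_id' t).fun_sub (hasDerivAt_sin t)).fun_pow 2).const_mul
        r).congr_deriv (by ring))
      (fun t ht => ?_) ?_ ⟨hlarge.le, hx'⟩
    · have hsin : 0 ≤ t - sin t := sub_nonneg.2 (sin_le (by linarith [ht.1]))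
      calc cusaHuygensGapDeriv t < 4611 / 50000 * (2 * (t - sin t) * (1 - cos t)) :=
            cusaHuygensGapDeriv_lt_mul ht.1.le (by linarith [ht.2, pi_lt_d4])
        _ ≤ r * (2 * (t - sin t) * (1 - cos t)) := by
          gcongr
          exact mul_nonneg (by linarith) (by linarith [cos_le_one t])
    · have : π - 2 ≠ 0 := by linarith [pi_gt_three]
      rw [cusaHuygensGap_pi_div_two, sin_pi_div_two, hr]
      field_simp

theorem cusa_huygens_refinement_phi (x : ℝ) (hx : 0 < x) (hx' : x < π / 2) :
    (2 + cos x) / 3 - (2 / 3 - 2 / π) * ((π / 2 - 1)⁻¹ * (x - sin x)) < sin x / x ∧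
    sin x / x < (2 + cos x) / 3 - (2 / 3 - 2 / π) * ((π / 2 - 1)⁻¹ ^ 2 * (x - sin x) ^ 2) := by
  have hleft := cusaHuygensGap_lt hx hx'
  have hright := mul_sq_lt_cusaHuygensGap hx hx'
  rw [cusaHuygensGap] at hleft hright
  constructor <;> linarith
end

section
/- For all real x with 0 < x < π/2, the following double inequality holds: (2 + cos x)/3 − (2/3 − 2/π)·Ψ₁(x) < (sin x)/x < (2 + cos x)/3 − (2/3 − 2/π)·Ψ₂(x). -/
/-!
Multiplied by `3πx`, the two inequalities say that `leftGap` and `rightGap` are positive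
on `(0, π/2)`; both vanish at `π/2`. Replacing `sin` and `cos` by their alternating Taylor
bounds, positivity near `0` becomes a polynomial inequality. On `[1.3, π/2)` resp.
`[1.4, π/2)` the same bounds show that the derivative is negative, so the gap decreases to
its value `0` at `π/2`.
-/

open Real

namespace CusaHuygens

open Finset Nat

noncomputable def sinTaylor (n : ℕ) (x : ℝ) : ℝ :=
  ∑ k ∈ range n, (-1) ^ k * x ^ (2 * k + 1) / (2 * k + 1)!

noncomputable def cosTaylor (n : ℕ) (x : ℝ) : ℝ :=
  ∑ k ∈ range n, (-1) ^ k * x ^ (2 * k) / (2 * k)!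

theorem hasDerivAt_sinTaylor (n : ℕ) (x : ℝ) :
    HasDerivAt (sinTaylor n) (cosTaylor n x) x := by
  refine (HasDerivAt.fun_sum fun k _ =>
    ((hasDerivAt_pow (2 * k + 1) x).const_mul ((-1 : ℝ) ^ k)).div_const
      ((2 * k + 1)! : ℝ)).congr_deriv (sum_congr rfl fun k _ => ?_)
  rw [Nat.factorial_succ]
  push_cast
  field_simp

theorem hasDerivAt_cosTaylor_succ (n : ℕ) (x : ℝ) :
    HasDerivAt (cosTaylor (n + 1)) (-sinTaylor n x) x := by
  refine (HasDerivAt.fun_sum fun k _ =>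
    ((hasDerivAt_pow (2 * k) x).const_mul ((-1 : ℝ) ^ k)).div_const
      ((2 * k)! : ℝ)).congr_deriv ?_
  rw [sum_range_succ', sinTaylor, ← sum_neg_distrib]
  simp only [Nat.cast_zero, mul_zero, zero_mul, zero_div, add_zero]
  refine sum_congr rfl fun k _ => ?_
  rw [show 2 * (k + 1) = 2 * k + 1 + 1 by ring, Nat.factorial_succ]
  push_cast
  field_simp
  ring

theorem nonneg_of_hasDerivAt_nonneg {f f' : ℝ → ℝ} (hf : ∀ t, HasDerivAt f (f' t) t)
    (hf₀ : 0 ≤ f 0) (hf' : ∀ t, 0 ≤ t → 0 ≤ f' t) {x : ℝ} (hx : 0 ≤ x) : 0 ≤ f x := by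
  have hmono : MonotoneOn f (Set.Ici 0) :=
    monotoneOn_of_hasDerivWithinAt_nonneg (convex_Ici 0)
      (fun t _ => (hf t).continuousAt.continuousWithinAt)
      (fun t _ => (hf t).hasDerivWithinAt)
      (fun t ht => hf' t (interior_subset ht))
  exact hf₀.trans (hmono Set.self_mem_Ici hx hx)

theorem pos_of_hasDerivAt_neg {f f' : ℝ → ℝ} {a b x : ℝ} (hf : ∀ t, HasDerivAt f (f' t) t)
    (hf' : ∀ t ∈ Set.Ioo a b, f' t < 0) (hb : f b = 0) (hx : x ∈ Set.Ico a b) : 0 < f x := by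
  have hanti : StrictAntiOn f (Set.Icc a b) :=
    strictAntiOn_of_hasDerivWithinAt_neg (convex_Icc a b)
      (fun t _ => (hf t).continuousAt.continuousWithinAt)
      (fun t _ => (hf t).hasDerivWithinAt)
      (fun t ht => hf' t (by rwa [interior_Icc] at ht))
  have hab : a ≤ b := hx.1.trans hx.2.le
  exact hb ▸ hanti ⟨hx.1, hx.2.le⟩ ⟨hab, le_rfl⟩ hx.2

theorem sin_taylor_step (n : ℕ) (hcos : ∀ t, 0 ≤ t → 0 ≤ (-1) ^ n * (cos t - cosTaylor n t))
    {x : ℝ} (hx : 0 ≤ x) : 0 ≤ (-1) ^ n * (sin x - sinTaylor n x) :=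
  nonneg_of_hasDerivAt_nonneg
    (fun t => ((hasDerivAt_sin t).sub (hasDerivAt_sinTaylor n t)).const_mul _)
    (by simp [sinTaylor]) hcos hx

theorem cos_taylor_step (n : ℕ) (hsin : ∀ t, 0 ≤ t → 0 ≤ (-1) ^ n * (sin t - sinTaylor n t))
    {x : ℝ} (hx : 0 ≤ x) : 0 ≤ (-1) ^ (n + 1) * (cos x - cosTaylor (n + 1) x) :=
  nonneg_of_hasDerivAt_nonneg
    (fun t => (((hasDerivAt_cos t).sub (hasDerivAt_cosTaylor_succ n t)).const_mul _).congr_deriv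
      (by ring))
    (by simp [cosTaylor, sum_range_succ']) hsin hx

theorem cos_taylor_sign (n : ℕ) {x : ℝ} (hx : 0 ≤ x) :
    0 ≤ (-1) ^ (n + 1) * (cos x - cosTaylor (n + 1) x) := by
  induction n generalizing x with
  | zero => simpa [cosTaylor] using cos_le_one x
  | succ n ih => exact cos_taylor_step (n + 1) (fun _ => sin_taylor_step (n + 1) fun _ => ih) hx

theorem sin_taylor_sign (n : ℕ) {x : ℝ} (hx : 0 ≤ x) :
    0 ≤ (-1) ^ (n + 1) * (sin x - sinTaylor (n + 1) x) :=
  sin_taylor_step (n + 1) (fun _ => cos_taylor_sign n) hx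

theorem taylor7_le_sin {x : ℝ} (hx : 0 ≤ x) :
    x - x ^ 3 / 6 + x ^ 5 / 120 - x ^ 7 / 5040 ≤ sin x := by
  have := sin_taylor_sign 3 hx
  norm_num [sinTaylor, sum_range_succ, factorial] at this
  linarith

theorem sin_le_taylor5 {x : ℝ} (hx : 0 ≤ x) : sin x ≤ x - x ^ 3 / 6 + x ^ 5 / 120 := by
  have := sin_taylor_sign 2 hx
  norm_num [sinTaylor, sum_range_succ, factorial] at this
  linarith

theorem taylor6_le_cos {x : ℝ} (hx : 0 ≤ x) :
    1 - x ^ 2 / 2 + x ^ 4 / 24 - x ^ 6 / 720 ≤ cos x := by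
  have := cos_taylor_sign 3 hx
  norm_num [cosTaylor, sum_range_succ, factorial] at this
  linarith

theorem cos_le_taylor4 {x : ℝ} (hx : 0 ≤ x) : cos x ≤ 1 - x ^ 2 / 2 + x ^ 4 / 24 := by
  have := cos_taylor_sign 2 hx
  norm_num [cosTaylor, sum_range_succ, factorial] at this
  linarith

theorem cos_le_taylor8 {x : ℝ} (hx : 0 ≤ x) :
    cos x ≤ 1 - x ^ 2 / 2 + x ^ 4 / 24 - x ^ 6 / 720 + x ^ 8 / 40320 := by
  have := cos_taylor_sign 4 hx
  norm_num [cosTaylor, sum_range_succ, factorial] at this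
  linarith

/-- `Ψ₁` of the paper. -/
noncomputable def psi (x : ℝ) : ℝ := sin x - x * cos x

/-- `3πx` times the gap in the left inequality. -/
noncomputable def leftGap (x : ℝ) : ℝ :=
  3 * π * sin x - π * x * (2 + cos x) + (2 * π - 6) * (x * psi x)

/-- `3πx` times the gap in the right inequality. -/
noncomputable def rightGap (x : ℝ) : ℝ :=
  π * x * (2 + cos x) - 3 * π * sin x - (2 * π - 6) * (x * psi x ^ 2)

noncomputable def leftGapDeriv (x : ℝ) : ℝ :=
  (2 * π - (2 * π - 6) * x) * cos x + (π * x + (2 * π - 6) * (1 + x ^ 2)) * sin x - 2 * π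

noncomputable def rightGapDeriv (x : ℝ) : ℝ :=
  2 * π - 2 * π * cos x - π * x * sin x - (2 * π - 6) * (psi x ^ 2 + 2 * x ^ 2 * sin x * psi x)

theorem hasDerivAt_psi (x : ℝ) : HasDerivAt psi (x * sin x) x :=
  ((hasDerivAt_sin x).sub ((hasDerivAt_id x).mul (hasDerivAt_cos x))).congr_deriv
    (by simp only [id]; ring)

theorem psi_pos {x : ℝ} (hx : 0 < x) (hx' : x < π / 2) : 0 < psi x := by
  have hcos : 0 < cos x := cos_pos_of_mem_Ioo ⟨by linarith, hx'⟩
  have htan : x < sin x / cos x := tan_eq_sin_div_cos x ▸ lt_tan hx hx'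
  rw [lt_div_iff₀ hcos] at htan
  exact sub_pos.2 htan

theorem hasDerivAt_leftGap (x : ℝ) : HasDerivAt leftGap (leftGapDeriv x) x := by
  have := ((((hasDerivAt_sin x).const_mul (3 * π)).sub
    (((hasDerivAt_id x).const_mul π).mul ((hasDerivAt_cos x).const_add 2))).add
    (((hasDerivAt_id x).mul (hasDerivAt_psi x)).const_mul (2 * π - 6)))
  exact this.congr_deriv (by simp only [leftGapDeriv, psi, id]; ring)

theorem hasDerivAt_rightGap (x : ℝ) : HasDerivAt rightGap (rightGapDeriv x) x := by
  have := (((((hasDerivAt_id x).const_mul π).mul ((hasDerivAt_cos x).const_add 2))).sub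
    ((hasDerivAt_sin x).const_mul (3 * π))).sub
    (((hasDerivAt_id x).mul ((hasDerivAt_psi x).pow 2)).const_mul (2 * π - 6))
  exact this.congr_deriv (by simp only [rightGapDeriv, id, Pi.pow_apply]; ring)

theorem leftGap_pi_div_two : leftGap (π / 2) = 0 := by
  simp only [leftGap, psi, sin_pi_div_two, cos_pi_div_two]; ring

theorem rightGap_pi_div_two : rightGap (π / 2) = 0 := by
  simp only [rightGap, psi, sin_pi_div_two, cos_pi_div_two]; ring

theorem leftGap_pos_of_le {x : ℝ} (hx : 0 < x) (h : x ≤ 1.3) : 0 < leftGap x := by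
  have hπ₁ := pi_gt_d6
  have hπ₂ := pi_lt_d6
  have hpow : ∀ k : ℕ, x ^ k ≤ 1.3 ^ k := fun k => pow_le_pow_left₀ hx.le h k
  calc 0 < x ^ 4 * ((2 * π - 6) / 3 - π * x / 60 - (2 * π - 6) * x ^ 2 / 30
          - π * x ^ 3 / 1680 - (2 * π - 6) * x ^ 4 / 5040) :=
        mul_pos (by positivity) (by nlinarith [hpow 2, hpow 3, hpow 4])
    _ = (3 * π + (2 * π - 6) * x) * (x - x ^ 3 / 6 + x ^ 5 / 120 - x ^ 7 / 5040)
          - (π * x + (2 * π - 6) * x ^ 2) * (1 - x ^ 2 / 2 + x ^ 4 / 24) - 2 * π * x := by ring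
    _ ≤ (3 * π + (2 * π - 6) * x) * sin x - (π * x + (2 * π - 6) * x ^ 2) * cos x
          - 2 * π * x := by
        gcongr
        · nlinarith
        · exact taylor7_le_sin hx.le
        · nlinarith
        · exact cos_le_taylor4 hx.le
    _ = leftGap x := by unfold leftGap psi; ring

theorem rightGap_pos_of_le {x : ℝ} (hx : 0 < x) (hx' : x < π / 2) (h : x ≤ 1.4) :
    0 < rightGap x := by
  have hπ₁ := pi_gt_d6
  have hπ₂ := pi_lt_d6
  have hψ : psi x ≤ x ^ 3 / 3 - x ^ 5 / 30 + x ^ 7 / 720 := by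
    have := mul_le_mul_of_nonneg_left (taylor6_le_cos hx.le) hx.le
    unfold psi; nlinarith [sin_le_taylor5 hx.le]
  have hinner : 0 < π * (1 / 60 - x ^ 2 / 720)
      - (2 * π - 6) * x ^ 2 * (1 / 3 - x ^ 2 / 30 + (x ^ 2) ^ 2 / 720) ^ 2 := by
    have hu : x ^ 2 ≤ 1.96 := by nlinarith
    have hu₀ : 0 ≤ x ^ 2 := sq_nonneg x
    generalize x ^ 2 = u at hu hu₀ ⊢
    have hpow : ∀ k : ℕ, u ^ k ≤ 1.96 ^ k := fun k => pow_le_pow_left₀ hu₀ hu k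
    nlinarith [hpow 2, hpow 3, hpow 4, hpow 5]
  have h2π6 : 0 ≤ 2 * π - 6 := by linarith
  have hcos := taylor6_le_cos hx.le
  have hsin := sin_le_taylor5 hx.le
  have hψ₀ := (psi_pos hx hx').le
  calc 0 < x ^ 5 * (π * (1 / 60 - x ^ 2 / 720)
          - (2 * π - 6) * x ^ 2 * (1 / 3 - x ^ 2 / 30 + (x ^ 2) ^ 2 / 720) ^ 2) :=
        mul_pos (by positivity) hinner
    _ = π * x * (2 + (1 - x ^ 2 / 2 + x ^ 4 / 24 - x ^ 6 / 720))
          - 3 * π * (x - x ^ 3 / 6 + x ^ 5 / 120)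
          - (2 * π - 6) * (x * (x ^ 3 / 3 - x ^ 5 / 30 + x ^ 7 / 720) ^ 2) := by ring
    _ ≤ rightGap x := by unfold rightGap; gcongr

theorem leftGapDeriv_majorant_neg {x : ℝ} (h₁ : 1.3 ≤ x) (h₂ : x < π / 2) :
    (2 * π - (2 * π - 6) * x) * (1 - x ^ 2 / 2 + x ^ 4 / 24 - x ^ 6 / 720 + x ^ 8 / 40320)
      + (π * x + (2 * π - 6) * (1 + x ^ 2)) * (x - x ^ 3 / 6 + x ^ 5 / 120) - 2 * π < 0 := by
  have hπ₁ := pi_gt_d6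
  have hπ₂ := pi_lt_d6
  have hx₀ : 0 ≤ x := by linarith
  have h₂' : x ≤ 1.5707965 := by linarith
  rcases le_or_gt x 1.45 with h | h
  · have lo : ∀ k : ℕ, (1.3 : ℝ) ^ k ≤ x ^ k := fun k => pow_le_pow_left₀ (by norm_num) h₁ k
    have hi : ∀ k : ℕ, x ^ k ≤ (1.45 : ℝ) ^ k := fun k => pow_le_pow_left₀ hx₀ h k
    nlinarith [lo 2, hi 2, lo 3, hi 3, lo 4, hi 4, lo 5, hi 5, lo 6, hi 6, lo 7, hi 7,
      lo 8, hi 8, lo 9, hi 9]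
  · have lo : ∀ k : ℕ, (1.45 : ℝ) ^ k ≤ x ^ k := fun k => pow_le_pow_left₀ (by norm_num) h.le k
    have hi : ∀ k : ℕ, x ^ k ≤ (1.5707965 : ℝ) ^ k := fun k => pow_le_pow_left₀ hx₀ h₂' k
    nlinarith [lo 2, hi 2, lo 3, hi 3, lo 4, hi 4, lo 5, hi 5, lo 6, hi 6, lo 7, hi 7,
      lo 8, hi 8, lo 9, hi 9]

-- `rightGapDeriv` with `sin`, `cos`, `psi` replaced by their Taylor bounds, in `u = x ^ 2`.
set_option maxHeartbeats 1000000 in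
theorem rightGapDeriv_majorant_neg {u : ℝ} (h₁ : 1.96 ≤ u) (h₂ : u < (π / 2) ^ 2) :
    2 * π - 2 * π * (1 - u / 2 + u ^ 2 / 24 - u ^ 3 / 720)
      - π * u * (1 - u / 6 + u ^ 2 / 120 - u ^ 3 / 5040)
      - (2 * π - 6) * (u * (u / 3 - u ^ 2 / 30 - u ^ 3 / 5040) ^ 2
        + 2 * u ^ 2 * (1 - u / 6 + u ^ 2 / 120 - u ^ 3 / 5040)
          * (u / 3 - u ^ 2 / 30 - u ^ 3 / 5040))
      < 0 := by
  have hπ₁ := pi_gt_d6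
  have hπ₂ := pi_lt_d6
  have hu₀ : 0 ≤ u := by linarith
  have h₂' : u ≤ 2.4674019 := by nlinarith
  rcases le_or_gt u 2.2 with h | h
  · have lo : ∀ k : ℕ, (1.96 : ℝ) ^ k ≤ u ^ k := fun k => pow_le_pow_left₀ (by norm_num) h₁ k
    have hi : ∀ k : ℕ, u ^ k ≤ (2.2 : ℝ) ^ k := fun k => pow_le_pow_left₀ hu₀ h k
    nlinarith [lo 2, hi 2, lo 3, hi 3, lo 4, hi 4, lo 5, hi 5, lo 6, hi 6, lo 7, hi 7, lo 8, hi 8]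
  · have lo : ∀ k : ℕ, (2.2 : ℝ) ^ k ≤ u ^ k := fun k => pow_le_pow_left₀ (by norm_num) h.le k
    have hi : ∀ k : ℕ, u ^ k ≤ (2.4674019 : ℝ) ^ k := fun k => pow_le_pow_left₀ hu₀ h₂' k
    nlinarith [lo 2, hi 2, lo 3, hi 3, lo 4, hi 4, lo 5, hi 5, lo 6, hi 6, lo 7, hi 7, lo 8, hi 8]

theorem leftGapDeriv_neg {x : ℝ} (h₁ : 1.3 < x) (h₂ : x < π / 2) : leftGapDeriv x < 0 := by
  have hπ₁ := pi_gt_d6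
  have hπ₂ := pi_lt_d6
  have hx₀ : 0 ≤ x := by linarith
  have hcos := cos_le_taylor8 hx₀
  have hsin := sin_le_taylor5 hx₀
  unfold leftGapDeriv
  calc _ ≤ (2 * π - (2 * π - 6) * x) * (1 - x ^ 2 / 2 + x ^ 4 / 24 - x ^ 6 / 720 + x ^ 8 / 40320)
          + (π * x + (2 * π - 6) * (1 + x ^ 2)) * (x - x ^ 3 / 6 + x ^ 5 / 120) - 2 * π := by
        gcongr
        all_goals nlinarith
    _ < 0 := leftGapDeriv_majorant_neg h₁.le h₂

theorem rightGapDeriv_neg {x : ℝ} (h₁ : 1.4 < x) (h₂ : x < π / 2) : rightGapDeriv x < 0 := by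
  have hπ₁ := pi_gt_d6
  have hπ₂ := pi_lt_d6
  have hx₀ : 0 ≤ x := by linarith
  have h2π6 : 0 ≤ 2 * π - 6 := by linarith
  have hcos := taylor6_le_cos hx₀
  have hsin := taylor7_le_sin hx₀
  have hψ : x ^ 3 / 3 - x ^ 5 / 30 - x ^ 7 / 5040 ≤ psi x := by
    have := mul_le_mul_of_nonneg_left (cos_le_taylor4 hx₀) hx₀
    unfold psi; nlinarith
  have hlo : ∀ k : ℕ, 1.4 ^ k ≤ x ^ k := fun k => pow_le_pow_left₀ (by norm_num) h₁.le k
  have hhi : ∀ k : ℕ, x ^ k ≤ 1.5707965 ^ k := fun k => pow_le_pow_left₀ hx₀ (by linarith) k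
  have hψ₀ : 0 ≤ x ^ 3 / 3 - x ^ 5 / 30 - x ^ 7 / 5040 := by nlinarith [hlo 3, hhi 5, hhi 7]
  have hsin₀ : 0 ≤ x - x ^ 3 / 6 + x ^ 5 / 120 - x ^ 7 / 5040 := by
    nlinarith [hlo 1, hhi 3, hlo 5, hhi 7]
  have hx2 : 1.96 ≤ x ^ 2 := by nlinarith
  unfold rightGapDeriv
  calc _ ≤ 2 * π - 2 * π * (1 - x ^ 2 / 2 + x ^ 4 / 24 - x ^ 6 / 720)
          - π * x * (x - x ^ 3 / 6 + x ^ 5 / 120 - x ^ 7 / 5040)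
          - (2 * π - 6) * ((x ^ 3 / 3 - x ^ 5 / 30 - x ^ 7 / 5040) ^ 2
            + 2 * x ^ 2 * (x - x ^ 3 / 6 + x ^ 5 / 120 - x ^ 7 / 5040)
              * (x ^ 3 / 3 - x ^ 5 / 30 - x ^ 7 / 5040)) := by
        gcongr
        exact mul_nonneg (by positivity) (hsin₀.trans hsin)
    _ = _ := by ring
    _ < 0 := rightGapDeriv_majorant_neg hx2 (by gcongr)

theorem leftGap_pos {x : ℝ} (hx : 0 < x) (hx' : x < π / 2) : 0 < leftGap x := by
  rcases le_or_gt x 1.3 with h | h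
  · exact leftGap_pos_of_le hx h
  · exact pos_of_hasDerivAt_neg hasDerivAt_leftGap (fun t ht => leftGapDeriv_neg ht.1 ht.2)
      leftGap_pi_div_two ⟨h.le, hx'⟩

theorem rightGap_pos {x : ℝ} (hx : 0 < x) (hx' : x < π / 2) : 0 < rightGap x := by
  rcases le_or_gt x 1.4 with h | h
  · exact rightGap_pos_of_le hx hx' h
  · exact pos_of_hasDerivAt_neg hasDerivAt_rightGap (fun t ht => rightGapDeriv_neg ht.1 ht.2)
      rightGap_pi_div_two ⟨h.le, hx'⟩

end CusaHuygens

open CusaHuygens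

theorem cusa_huygens_refinement_psi (x : ℝ) (hx : 0 < x) (hx' : x < π / 2) :
    (2 + cos x) / 3 - (2 / 3 - 2 / π) * (sin x - x * cos x) < sin x / x ∧
    sin x / x < (2 + cos x) / 3 - (2 / 3 - 2 / π) * (sin x - x * cos x) ^ 2 := by
  have h3πx : 0 < 3 * π * x := by positivity
  have hleft : sin x / x - ((2 + cos x) / 3 - (2 / 3 - 2 / π) * (sin x - x * cos x))
      = leftGap x / (3 * π * x) := by
    unfold leftGap psi; field_simp; ring
  have hright : (2 + cos x) / 3 - (2 / 3 - 2 / π) * (sin x - x * cos x) ^ 2 - sin x / x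
      = rightGap x / (3 * π * x) := by
    unfold rightGap psi; field_simp; ring
  constructor
  · linarith [div_pos (leftGap_pos hx hx') h3πx]
  · linarith [div_pos (rightGap_pos hx hx') h3πx]
end

section
/- For all real x with 0 < x < π/2, one has Φ₁(x) < Ψ₁(x); equivalently, 2/π + (1 − 2/π)·cos x < (sin x)/x for all x in (0, π/2). -/
/-!
Both inequalities say that `F = psiPhiGap = (π/2 - 1)·(Ψ₁ - Φ₁)` is positive on `(0, π/2)`.
`F` vanishes at `0` and at `π/2`, and since `1 - cos x = sin x · tan (x/2)`,
`F' x = x sin x · (π/2 - 1 - tan (x/2) / x)`. As `tan u / u` is strictly increasing on `(0, π/2)`,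
`F'` changes sign at most once, from positive to negative, so `F` rises and then falls between its
two zeros.
-/

open Real Set

lemma Real.strictMonoOn_tan_div_self : StrictMonoOn (fun x => tan x / x) (Ioo 0 (π / 2)) := by
  have hcos : ∀ x ∈ Ioo 0 (π / 2), 0 < cos x := fun x hx =>
    cos_pos_of_mem_Ioo ⟨by linarith [hx.1, pi_pos], hx.2⟩
  have hderiv : ∀ x ∈ Ioo 0 (π / 2),
      HasDerivAt (fun x => tan x / x) ((x / cos x ^ 2 - tan x) / x ^ 2) x := fun x hx =>
    ((hasDerivAt_tan (hcos x hx).ne').div (hasDerivAt_id' x) hx.1.ne').congr_deriv (by ring)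
  refine strictMonoOn_of_deriv_pos (convex_Ioo _ _)
    (fun x hx => (hderiv x hx).continuousAt.continuousWithinAt) fun x hx => ?_
  rw [interior_Ioo] at hx
  have hcx := hcos x hx
  have hsin : sin (2 * x) < 2 * x := sin_lt (by linarith [hx.1])
  have hnum : x / cos x ^ 2 - tan x = (2 * x - sin (2 * x)) / (2 * cos x ^ 2) := by
    rw [sin_two_mul, tan_eq_sin_div_cos]
    field_simp
  rw [(hderiv x hx).deriv, hnum]
  exact div_pos (div_pos (by linarith) (by positivity)) (pow_pos hx.1 2)

lemma Real.strictMonoOn_tan_half_div_self : StrictMonoOn (fun x => tan (x / 2) / x) (Ioo 0 π) := by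
  intro x hx y hy hxy
  have h := strictMonoOn_tan_div_self ⟨half_pos hx.1, by linarith [hx.2]⟩
    ⟨half_pos hy.1, by linarith [hy.2]⟩ (by linarith : x / 2 < y / 2)
  have halve : ∀ z : ℝ, tan (z / 2) / (z / 2) = 2 * (tan (z / 2) / z) := fun z => by ring
  simp only [halve] at h
  dsimp only
  linarith

lemma Real.one_sub_cos_eq_sin_mul_tan_half {x : ℝ} (h : cos (x / 2) ≠ 0) :
    1 - cos x = sin x * tan (x / 2) := by
  obtain ⟨u, rfl⟩ : ∃ u, x = 2 * u := ⟨x / 2, by ring⟩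
  rw [mul_div_cancel_left₀ u two_ne_zero] at h ⊢
  rw [cos_two_mul, sin_two_mul, tan_eq_sin_div_cos]
  field_simp
  linear_combination (-2) * sin_sq_add_cos_sq u

noncomputable def psiPhiGap (x : ℝ) : ℝ := (π / 2 - 1) * (sin x - x * cos x) - (x - sin x)

lemma psiPhiGap_zero : psiPhiGap 0 = 0 := by simp [psiPhiGap]

lemma psiPhiGap_pi_div_two : psiPhiGap (π / 2) = 0 := by simp [psiPhiGap]

lemma hasDerivAt_psiPhiGap (x : ℝ) :
    HasDerivAt psiPhiGap ((π / 2 - 1) * x * sin x - (1 - cos x)) x :=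
  ((((hasDerivAt_sin x).sub ((hasDerivAt_id' x).mul (hasDerivAt_cos x))).const_mul (π / 2 - 1)).sub
    ((hasDerivAt_id' x).sub (hasDerivAt_sin x))).congr_deriv (by ring)

lemma deriv_psiPhiGap {x : ℝ} (hx : x ∈ Ioo 0 π) :
    deriv psiPhiGap x = x * sin x * (π / 2 - 1 - tan (x / 2) / x) := by
  have hcos : cos (x / 2) ≠ 0 :=
    (cos_pos_of_mem_Ioo ⟨by linarith [hx.1, pi_pos], by linarith [hx.2]⟩).ne'
  rw [(hasDerivAt_psiPhiGap x).deriv, one_sub_cos_eq_sin_mul_tan_half hcos]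
  field_simp [hx.1.ne']

lemma psiPhiGap_pos {x : ℝ} (hx : 0 < x) (hx' : x < π / 2) : 0 < psiPhiGap x := by
  have hcont : Continuous psiPhiGap := by unfold psiPhiGap; fun_prop
  have hweight : ∀ y ∈ Ioo 0 (π / 2), 0 < y * sin y := fun y hy =>
    mul_pos hy.1 (sin_pos_of_pos_of_lt_pi hy.1 (by linarith [hy.2, pi_pos]))
  have hmem : ∀ {y}, y ∈ Ioo 0 (π / 2) → y ∈ Ioo 0 π := fun hy => ⟨hy.1, by linarith [hy.2, pi_pos]⟩
  have hx₀ : x ∈ Ioo 0 (π / 2) := ⟨hx, hx'⟩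
  rcases le_or_gt (tan (x / 2) / x) (π / 2 - 1) with h | h
  · have hmono : StrictMonoOn psiPhiGap (Icc 0 x) :=
      strictMonoOn_of_deriv_pos (convex_Icc 0 x) hcont.continuousOn fun y hy => by
        rw [interior_Icc] at hy
        have hy₀ : y ∈ Ioo 0 (π / 2) := ⟨hy.1, hy.2.trans hx'⟩
        rw [deriv_psiPhiGap (hmem hy₀)]
        exact mul_pos (hweight y hy₀) (sub_pos.2
          ((strictMonoOn_tan_half_div_self (hmem hy₀) (hmem hx₀) hy.2).trans_le h))
    simpa [psiPhiGap_zero] using hmono (left_mem_Icc.2 hx.le) (right_mem_Icc.2 hx.le) hx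
  · have hanti : StrictAntiOn psiPhiGap (Icc x (π / 2)) :=
      strictAntiOn_of_deriv_neg (convex_Icc x (π / 2)) hcont.continuousOn fun y hy => by
        rw [interior_Icc] at hy
        have hy₀ : y ∈ Ioo 0 (π / 2) := ⟨hx.trans hy.1, hy.2⟩
        rw [deriv_psiPhiGap (hmem hy₀)]
        exact mul_neg_of_pos_of_neg (hweight y hy₀) (sub_neg.2
          (h.trans (strictMonoOn_tan_half_div_self (hmem hx₀) (hmem hy₀) hy.1)))
    simpa [psiPhiGap_pi_div_two] using
      hanti (left_mem_Icc.2 hx'.le) (right_mem_Icc.2 hx'.le) hx'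

theorem phi_one_lt_psi_one (x : ℝ) (hx : 0 < x) (hx' : x < π / 2) :
    (π / 2 - 1)⁻¹ * (x - sin x) < sin x - x * cos x ∧
    2 / π + (1 - 2 / π) * cos x < sin x / x := by
  have hc : 0 < π / 2 - 1 := by linarith [pi_gt_three]
  have hgap : 0 < psiPhiGap x := psiPhiGap_pos hx hx'
  unfold psiPhiGap at hgap
  constructor
  · rw [inv_mul_lt_iff₀ hc]
    linarith
  · rw [lt_div_iff₀ hx]
    calc (2 / π + (1 - 2 / π) * cos x) * x
        = 2 / π * (x + (π / 2 - 1) * (x * cos x)) := by field_simp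
      _ < 2 / π * (π / 2 * sin x) := by gcongr; linarith
      _ = sin x := by field_simp
end

section
/- For all real x with 0 < x < π/2, the following double inequality holds: (2 + cos x)/3 − (2/3 − 2/π)·Φ₁(x) < (sin x)/x < (2 + cos x)/3 − (2/3 − 2/π)·Ψ₂(x). -/
/-!
Multiplied by `x`, each inequality says that a function `F` with `F 0 = F (π / 2) = 0` is positive
on `(0, π / 2)`; the constants are exactly those making `F (π / 2) = 0`. If `F'` is positive and
then negative on `(0, π / 2)`, then `F > 0` there; and if `G 0 = 0`, `G (π / 2) < 0` and `G'` is
positive then negative, then so is `G`. Going down the derivatives of `F` (to `F'''` for the lower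
bound, to `F''` for the upper one) we reach a positive weight times a strictly decreasing function,
which changes sign once by the intermediate value theorem.
-/

open Real Set

def PosThenNeg (f : ℝ → ℝ) (a b : ℝ) : Prop :=
  ∃ c ∈ Ioc a b, (∀ x ∈ Ioo a c, 0 < f x) ∧ ∀ x ∈ Ioo c b, f x < 0

section PosThenNeg

variable {f g w f' : ℝ → ℝ} {a b : ℝ}

lemma PosThenNeg.of_eqOn_mul (hg : PosThenNeg g a b) (hw : ∀ x ∈ Ioo a b, 0 < w x)
    (hfg : EqOn f (fun x ↦ w x * g x) (Ioo a b)) : PosThenNeg f a b := by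
  obtain ⟨c, hc, hpos, hneg⟩ := hg
  refine ⟨c, hc, fun x hx ↦ ?_, fun x hx ↦ ?_⟩
  · have hx' : x ∈ Ioo a b := ⟨hx.1, hx.2.trans_le hc.2⟩
    rw [hfg hx']
    exact mul_pos (hw x hx') (hpos x hx)
  · have hx' : x ∈ Ioo a b := ⟨hc.1.trans hx.1, hx.2⟩
    rw [hfg hx']
    exact mul_neg_of_pos_of_neg (hw x hx') (hneg x hx)

lemma StrictAntiOn.posThenNeg (hg : StrictAntiOn g (Ioc a b)) {p : ℝ} (hp : p ∈ Ioo a b)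
    (hcont : ContinuousOn g (Icc p b)) (hgp : 0 < g p) (hgb : g b < 0) : PosThenNeg g a b := by
  obtain ⟨c, hc, hgc⟩ := intermediate_value_Ioo' hp.2.le hcont ⟨hgb, hgp⟩
  have hc' : c ∈ Ioc a b := ⟨hp.1.trans hc.1, hc.2.le⟩
  refine ⟨c, hc', fun x hx ↦ ?_, fun x hx ↦ ?_⟩
  · simpa [hgc] using hg ⟨hx.1, hx.2.le.trans hc'.2⟩ hc' hx.2
  · simpa [hgc] using hg hc' ⟨hc'.1.trans hx.1, hx.2.le⟩ hx.1

lemma strictMonoOn_strictAntiOn_of_hasDerivAt (hf : ContinuousOn f (Icc a b))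
    (hf' : ∀ x ∈ Ioo a b, HasDerivAt f (f' x) x) {c : ℝ} (hc : c ∈ Icc a b)
    (hpos : ∀ x ∈ Ioo a c, 0 < f' x) (hneg : ∀ x ∈ Ioo c b, f' x < 0) :
    StrictMonoOn f (Icc a c) ∧ StrictAntiOn f (Icc c b) := by
  constructor
  · refine strictMonoOn_of_hasDerivWithinAt_pos (convex_Icc a c)
      (hf.mono (Icc_subset_Icc le_rfl hc.2)) (fun x hx ↦ ?_) (by simpa using hpos)
    rw [interior_Icc] at hx ⊢
    exact (hf' x ⟨hx.1, hx.2.trans_le hc.2⟩).hasDerivWithinAt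
  · refine strictAntiOn_of_hasDerivWithinAt_neg (convex_Icc c b)
      (hf.mono (Icc_subset_Icc hc.1 le_rfl)) (fun x hx ↦ ?_) (by simpa using hneg)
    rw [interior_Icc] at hx ⊢
    exact (hf' x ⟨hc.1.trans_lt hx.1, hx.2⟩).hasDerivWithinAt

lemma PosThenNeg.of_hasDerivAt (h : PosThenNeg f' a b) (hf : ContinuousOn f (Icc a b))
    (hf' : ∀ x ∈ Ioo a b, HasDerivAt f (f' x) x) (hfa : 0 ≤ f a) (hfb : f b < 0) :
    PosThenNeg f a b := by
  obtain ⟨c, hc, hpos, hneg⟩ := h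
  obtain ⟨hmono, hanti⟩ :=
    strictMonoOn_strictAntiOn_of_hasDerivAt hf hf' (Ioc_subset_Icc_self hc) hpos hneg
  have hleft : ∀ x ∈ Ioc a c, 0 < f x := fun x hx ↦
    hfa.trans_lt <| hmono (left_mem_Icc.2 (hx.1.trans_le hx.2).le) (Ioc_subset_Icc_self hx) hx.1
  obtain ⟨d, hd, hfd⟩ := intermediate_value_Ioo' hc.2 (hf.mono (Icc_subset_Icc hc.1.le le_rfl))
    ⟨hfb, hleft c (right_mem_Ioc.2 hc.1)⟩
  refine ⟨d, ⟨hc.1.trans hd.1, hd.2.le⟩, fun x hx ↦ ?_, fun x hx ↦ ?_⟩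
  · rcases le_or_gt x c with hxc | hxc
    · exact hleft x ⟨hx.1, hxc⟩
    · simpa [hfd] using hanti ⟨hxc.le, (hx.2.trans hd.2).le⟩ (Ioo_subset_Icc_self hd) hx.2
  · simpa [hfd] using hanti (Ioo_subset_Icc_self hd) ⟨(hd.1.trans hx.1).le, hx.2.le⟩ hx.1

lemma PosThenNeg.pos_of_hasDerivAt (h : PosThenNeg f' a b) (hf : ContinuousOn f (Icc a b))
    (hf' : ∀ x ∈ Ioo a b, HasDerivAt f (f' x) x) (hfa : 0 ≤ f a) (hfb : 0 ≤ f b) :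
    ∀ x ∈ Ioo a b, 0 < f x := by
  obtain ⟨c, hc, hpos, hneg⟩ := h
  obtain ⟨hmono, hanti⟩ :=
    strictMonoOn_strictAntiOn_of_hasDerivAt hf hf' (Ioc_subset_Icc_self hc) hpos hneg
  intro x hx
  rcases le_or_gt x c with hxc | hxc
  · exact hfa.trans_lt <| hmono (left_mem_Icc.2 hc.1.le) ⟨hx.1.le, hxc⟩ hx.1
  · exact hfb.trans_lt <| hanti ⟨hxc.le, hx.2.le⟩ (right_mem_Icc.2 hc.2) hx.2

end PosThenNeg

lemma hasDerivAt_sin_sub_mul_cos (x : ℝ) :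
    HasDerivAt (fun y ↦ sin y - y * cos y) (x * sin x) x :=
  ((hasDerivAt_sin x).sub ((hasDerivAt_id' x).mul (hasDerivAt_cos x))).congr_deriv (by ring)

lemma sin_sub_mul_cos_pos {x : ℝ} (hx₀ : 0 < x) (hx : x ≤ π) : 0 < sin x - x * cos x := by
  have hmono : StrictMonoOn (fun y ↦ sin y - y * cos y) (Icc 0 π) := by
    refine strictMonoOn_of_deriv_pos (convex_Icc 0 π) (by fun_prop) fun y hy ↦ ?_
    rw [interior_Icc] at hy
    rw [(hasDerivAt_sin_sub_mul_cos y).deriv]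
    exact mul_pos hy.1 (sin_pos_of_mem_Ioo hy)
  simpa using hmono (left_mem_Icc.2 pi_pos.le) ⟨hx₀.le, hx⟩ hx₀

lemma sq_mul_sin_lt_three_mul_sin_sub_mul_cos {x : ℝ} (hx₀ : 0 < x) (hx : x ≤ π) :
    x ^ 2 * sin x < 3 * (sin x - x * cos x) := by
  have hanti : StrictAntiOn (fun y ↦ y ^ 2 * sin y - 3 * (sin y - y * cos y)) (Icc 0 π) := by
    refine strictAntiOn_of_deriv_neg (convex_Icc 0 π) (by fun_prop) fun y hy ↦ ?_
    rw [interior_Icc] at hy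
    have hderiv : HasDerivAt (fun y ↦ y ^ 2 * sin y - 3 * (sin y - y * cos y))
        (-(y * (sin y - y * cos y))) y :=
      (((hasDerivAt_pow 2 y).mul (hasDerivAt_sin y)).sub
        ((hasDerivAt_sin_sub_mul_cos y).const_mul 3)).congr_deriv (by push_cast; ring)
    rw [hderiv.deriv, neg_lt_zero]
    exact mul_pos hy.1 (sin_sub_mul_cos_pos hy.1 hy.2.le)
  simpa using hanti (left_mem_Icc.2 pi_pos.le) ⟨hx₀.le, hx⟩ hx₀

lemma strictAntiOn_sin_sub_mul_cos_div_cube :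
    StrictAntiOn (fun x ↦ (sin x - x * cos x) / x ^ 3) (Ioc 0 π) := by
  have hcont : ContinuousOn (fun x ↦ (sin x - x * cos x) / x ^ 3) (Ioc 0 π) :=
    ContinuousOn.div (by fun_prop) (by fun_prop) fun x hx ↦ pow_ne_zero 3 hx.1.ne'
  refine strictAntiOn_of_deriv_neg (convex_Ioc 0 π) hcont fun x hx ↦ ?_
  rw [interior_Ioc] at hx
  have hderiv : HasDerivAt (fun x ↦ (sin x - x * cos x) / x ^ 3)
      ((x ^ 2 * sin x - 3 * (sin x - x * cos x)) / x ^ 4) x :=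
    ((hasDerivAt_sin_sub_mul_cos x).div (hasDerivAt_pow 3 x)
      (pow_ne_zero 3 hx.1.ne')).congr_deriv (by field_simp [hx.1.ne']; ring)
  rw [hderiv.deriv]
  exact div_neg_of_neg_of_pos (sub_neg.2 (sq_mul_sin_lt_three_mul_sin_sub_mul_cos hx.1 hx.2.le))
    (pow_pos hx.1 4)

lemma strictAntiOn_mul_cos_div_sin : StrictAntiOn (fun x ↦ x * cos x / sin x) (Ioo 0 π) := by
  have hcont : ContinuousOn (fun x ↦ x * cos x / sin x) (Ioo 0 π) :=
    ContinuousOn.div (by fun_prop) (by fun_prop) fun x hx ↦ (sin_pos_of_mem_Ioo hx).ne'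
  refine strictAntiOn_of_deriv_neg (convex_Ioo 0 π) hcont fun x hx ↦ ?_
  rw [interior_Ioo] at hx
  have hsin := sin_pos_of_mem_Ioo hx
  have hderiv : HasDerivAt (fun x ↦ x * cos x / sin x) ((sin x * cos x - x) / sin x ^ 2) x :=
    (((hasDerivAt_id' x).mul (hasDerivAt_cos x)).div (hasDerivAt_sin x) hsin.ne').congr_deriv
      (by simp only [Pi.mul_apply]; linear_combination (-x / sin x ^ 2) * sin_sq_add_cos_sq x)
  have hsin_two_mul : sin (2 * x) < 2 * x := sin_lt (by linarith [hx.1])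
  rw [sin_two_mul] at hsin_two_mul
  rw [hderiv.deriv]
  exact div_neg_of_neg_of_pos (by linarith) (by positivity)

noncomputable def upperCoeff : ℝ := 2 / 3 - 2 / π

noncomputable def lowerCoeff : ℝ := upperCoeff / (π / 2 - 1)

lemma upperCoeff_mem_Ioo : upperCoeff ∈ Ioo (1 / 40) (1 / 32) := by
  have hπ₁ := pi_gt_d2
  have hπ₂ := pi_lt_d4
  rw [upperCoeff, show 2 / 3 - 2 / π = (2 * π - 6) / (3 * π) by field_simp; ring]
  constructor
  · rw [lt_div_iff₀ (by positivity)]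
    linarith
  · rw [div_lt_iff₀ (by positivity)]
    linarith

lemma lowerCoeff_mem_Ioo : lowerCoeff ∈ Ioo (1 / 30) (1 / 16) := by
  have hπ₁ := pi_gt_d2
  have hπ₂ := pi_lt_d2
  obtain ⟨hk₁, hk₂⟩ := upperCoeff_mem_Ioo
  have hd : 0 < π / 2 - 1 := by linarith
  constructor
  · rw [lowerCoeff, lt_div_iff₀ hd]
    nlinarith
  · rw [lowerCoeff, div_lt_iff₀ hd]
    nlinarith

section LowerBound

variable {l : ℝ}

noncomputable def lowerGap (l x : ℝ) : ℝ := sin x - x * (2 + cos x) / 3 + l * (x ^ 2 - x * sin x)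

noncomputable def lowerGapDeriv (l x : ℝ) : ℝ :=
  (2 * cos x - 2) / 3 + x * sin x / 3 + l * (2 * x - sin x - x * cos x)

noncomputable def lowerGapDeriv2 (l x : ℝ) : ℝ :=
  (x * cos x - sin x) / 3 + l * (2 - 2 * cos x + x * sin x)

noncomputable def lowerGapDeriv3 (l x : ℝ) : ℝ := -(x * sin x) / 3 + l * (3 * sin x + x * cos x)

lemma hasDerivAt_lowerGap (l x : ℝ) : HasDerivAt (lowerGap l) (lowerGapDeriv l x) x :=
  (((hasDerivAt_sin x).sub (((hasDerivAt_id' x).mul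
    ((hasDerivAt_const x 2).add (hasDerivAt_cos x))).div_const 3)).add
    (((hasDerivAt_pow 2 x).sub ((hasDerivAt_id' x).mul (hasDerivAt_sin x))).const_mul l)).congr_deriv
    (by simp only [lowerGapDeriv, Pi.add_apply]; push_cast; ring)

lemma hasDerivAt_lowerGapDeriv (l x : ℝ) : HasDerivAt (lowerGapDeriv l) (lowerGapDeriv2 l x) x :=
  (((((hasDerivAt_cos x).const_mul 2).sub (hasDerivAt_const x 2)).div_const 3).add
    (((hasDerivAt_id' x).mul (hasDerivAt_sin x)).div_const 3) |>.add
    (((((hasDerivAt_id' x).const_mul 2).sub (hasDerivAt_sin x)).sub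
      ((hasDerivAt_id' x).mul (hasDerivAt_cos x))).const_mul l)).congr_deriv
    (by simp only [lowerGapDeriv2]; ring)

lemma hasDerivAt_lowerGapDeriv2 (l x : ℝ) :
    HasDerivAt (lowerGapDeriv2 l) (lowerGapDeriv3 l x) x :=
  (((((hasDerivAt_id' x).mul (hasDerivAt_cos x)).sub (hasDerivAt_sin x)).div_const 3).add
    ((((hasDerivAt_const x 2).sub ((hasDerivAt_cos x).const_mul 2)).add
      ((hasDerivAt_id' x).mul (hasDerivAt_sin x))).const_mul l)).congr_deriv
    (by simp only [lowerGapDeriv3]; ring)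

lemma lowerGapDeriv3_posThenNeg (hl : 1 / 30 < l) (hl' : l < 1 / 16) :
    PosThenNeg (lowerGapDeriv3 l) 0 (π / 2) := by
  have hπ₁ := pi_gt_d2
  have hπ₂ := pi_lt_d2
  have hIoc : Ioc 0 (π / 2) ⊆ Ioo 0 π := fun x hx ↦ ⟨hx.1, by linarith [hx.2]⟩
  set h : ℝ → ℝ := fun x ↦ 3 * l - x / 3 + l * (x * cos x / sin x)
  have hanti : StrictAntiOn h (Ioc 0 (π / 2)) := fun x hx y hy hxy ↦ by
    have := strictAntiOn_mul_cos_div_sin (hIoc hx) (hIoc hy) hxy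
    simp only [h]
    nlinarith
  have hcont : ContinuousOn h (Icc (1 / 4) (π / 2)) :=
    ContinuousOn.add (by fun_prop) <| ContinuousOn.mul (by fun_prop) <|
      ContinuousOn.div (by fun_prop) (by fun_prop) fun x hx ↦
        (sin_pos_of_mem_Ioo (hIoc ⟨by linarith [hx.1], hx.2⟩)).ne'
  have hquarter : 0 < h (1 / 4) := by
    have : 0 < (1 / 4 : ℝ) * cos (1 / 4) / sin (1 / 4) :=
      div_pos (mul_pos (by norm_num) (cos_pos_of_mem_Ioo ⟨by linarith, by linarith⟩))
        (sin_pos_of_mem_Ioo ⟨by norm_num, by linarith⟩)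
    simp only [h]
    nlinarith
  have hend : h (π / 2) < 0 := by
    simp only [h, cos_pi_div_two, sin_pi_div_two]
    linarith
  refine (hanti.posThenNeg ⟨by norm_num, by linarith⟩ hcont hquarter hend).of_eqOn_mul
    (fun x hx ↦ sin_pos_of_mem_Ioo (hIoc (Ioo_subset_Ioc_self hx))) fun x hx ↦ ?_
  have := (sin_pos_of_mem_Ioo (hIoc (Ioo_subset_Ioc_self hx))).ne'
  simp only [lowerGapDeriv3, h]
  field_simp
  ring

lemma lowerGapDeriv_posThenNeg (hl : 1 / 30 < l) (hl' : l < 1 / 16) :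
    PosThenNeg (lowerGapDeriv l) 0 (π / 2) := by
  have hπ₁ := pi_gt_d2
  have hπ₂ := pi_lt_d2
  have hderiv2 : PosThenNeg (lowerGapDeriv2 l) 0 (π / 2) := by
    refine (lowerGapDeriv3_posThenNeg hl hl').of_hasDerivAt
      (HasDerivAt.continuousOn fun x _ ↦ hasDerivAt_lowerGapDeriv2 l x)
      (fun x _ ↦ hasDerivAt_lowerGapDeriv2 l x) (by simp [lowerGapDeriv2]) ?_
    simp only [lowerGapDeriv2, cos_pi_div_two, sin_pi_div_two]
    nlinarith
  refine hderiv2.of_hasDerivAt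
    (HasDerivAt.continuousOn fun x _ ↦ hasDerivAt_lowerGapDeriv l x)
    (fun x _ ↦ hasDerivAt_lowerGapDeriv l x) (by simp [lowerGapDeriv]) ?_
  simp only [lowerGapDeriv, cos_pi_div_two, sin_pi_div_two]
  nlinarith

lemma lowerGap_pos {x : ℝ} (hx : x ∈ Ioo 0 (π / 2)) : 0 < lowerGap lowerCoeff x := by
  obtain ⟨hl, hl'⟩ := lowerCoeff_mem_Ioo
  refine (lowerGapDeriv_posThenNeg hl hl').pos_of_hasDerivAt
    (HasDerivAt.continuousOn fun x _ ↦ hasDerivAt_lowerGap _ x)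
    (fun x _ ↦ hasDerivAt_lowerGap _ x) (by simp [lowerGap]) (le_of_eq ?_) x hx
  have : π - 2 ≠ 0 := by linarith [pi_gt_three]
  simp only [lowerGap, lowerCoeff, upperCoeff, cos_pi_div_two, sin_pi_div_two]
  field_simp
  ring

end LowerBound

section UpperBound

variable {k : ℝ}

noncomputable def upperGap (k x : ℝ) : ℝ :=
  x * (2 + cos x) / 3 - k * x * (sin x - x * cos x) ^ 2 - sin x

noncomputable def upperGapDeriv (k x : ℝ) : ℝ :=
  (2 - 2 * cos x - x * sin x) / 3 - k * (sin x - x * cos x) ^ 2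
    - 2 * k * x ^ 2 * sin x * (sin x - x * cos x)

noncomputable def upperWeight (k x : ℝ) : ℝ := 1 / 3 - 6 * k * x * sin x - 2 * k * x ^ 2 * cos x

noncomputable def upperGapDeriv2 (k x : ℝ) : ℝ :=
  (sin x - x * cos x) * upperWeight k x - 2 * k * x ^ 3 * sin x ^ 2

lemma hasDerivAt_upperGap (k x : ℝ) : HasDerivAt (upperGap k) (upperGapDeriv k x) x :=
  (((((hasDerivAt_id' x).mul ((hasDerivAt_const x 2).add (hasDerivAt_cos x))).div_const 3).sub
    (((hasDerivAt_id' x).const_mul k).mul ((hasDerivAt_sin_sub_mul_cos x).pow 2))).sub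
    (hasDerivAt_sin x)).congr_deriv
    (by simp only [upperGapDeriv, Pi.add_apply, Pi.pow_apply]; push_cast; ring)

lemma hasDerivAt_upperGapDeriv (k x : ℝ) :
    HasDerivAt (upperGapDeriv k) (upperGapDeriv2 k x) x :=
  ((((((hasDerivAt_const x 2).sub ((hasDerivAt_cos x).const_mul 2)).sub
    ((hasDerivAt_id' x).mul (hasDerivAt_sin x))).div_const 3).sub
    (((hasDerivAt_sin_sub_mul_cos x).pow 2).const_mul k)).sub
    ((((hasDerivAt_pow 2 x).const_mul (2 * k)).mul (hasDerivAt_sin x)).mul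
      (hasDerivAt_sin_sub_mul_cos x))).congr_deriv
    (by simp only [upperGapDeriv2, upperWeight, Pi.mul_apply]; push_cast; ring)

lemma hasDerivAt_upperWeight (k x : ℝ) :
    HasDerivAt (upperWeight k) (2 * k * ((x ^ 2 - 3) * sin x - 5 * x * cos x)) x :=
  (((hasDerivAt_const x (1 / 3)).sub (((hasDerivAt_id' x).const_mul (6 * k)).mul
    (hasDerivAt_sin x))).sub (((hasDerivAt_pow 2 x).const_mul (2 * k)).mul
    (hasDerivAt_cos x))).congr_deriv (by push_cast; ring)

lemma strictAntiOn_upperWeight (hk : 0 < k) : StrictAntiOn (upperWeight k) (Icc 0 (π / 2)) := by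
  refine strictAntiOn_of_deriv_neg (convex_Icc 0 (π / 2))
    (HasDerivAt.continuousOn fun x _ ↦ hasDerivAt_upperWeight k x) fun x hx ↦ ?_
  rw [interior_Icc] at hx
  have hπ := pi_lt_d2
  have hsin : 0 < sin x := sin_pos_of_mem_Ioo ⟨hx.1, by linarith [hx.2, pi_pos]⟩
  have hcos : 0 < cos x := cos_pos_of_mem_Ioo ⟨by linarith [hx.1, pi_pos], hx.2⟩
  have hsq : x ^ 2 < 3 := by nlinarith [hx.1, hx.2]
  rw [(hasDerivAt_upperWeight k x).deriv]
  refine mul_neg_of_pos_of_neg (by positivity) ?_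
  nlinarith [mul_pos hx.1 hcos]

-- `upperGapDeriv2 k x / (x ^ 3 * sin x ^ 2)`
noncomputable def upperGapDeriv2Quot (k x : ℝ) : ℝ :=
  (sin x - x * cos x) / x ^ 3 * upperWeight k x / sin x ^ 2 - 2 * k

lemma upperWeight_pi_div_two (k : ℝ) : upperWeight k (π / 2) = 1 / 3 - 3 * k * π := by
  simp only [upperWeight, cos_pi_div_two, sin_pi_div_two]
  ring

lemma one_div_thirty_lt_upperWeight (hk : 0 < k) (hk' : k < 1 / 32) {x : ℝ}
    (hx : x ∈ Icc 0 (π / 2)) : 1 / 30 < upperWeight k x := by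
  have hπ := pi_lt_d2
  calc 1 / 30 < upperWeight k (π / 2) := by rw [upperWeight_pi_div_two]; nlinarith
    _ ≤ upperWeight k x :=
      (strictAntiOn_upperWeight hk).antitoneOn hx (right_mem_Icc.2 (by positivity)) hx.2

lemma strictAntiOn_upperGapDeriv2Quot (hk : 0 < k) (hk' : k < 1 / 32) :
    StrictAntiOn (upperGapDeriv2Quot k) (Ioc 0 (π / 2)) := by
  intro x hx y hy hxy
  have hπ := pi_pos
  have hIoc : Ioc 0 (π / 2) ⊆ Ioc 0 π := fun z hz ↦ ⟨hz.1, by linarith [hz.2]⟩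
  have hsin_x : 0 < sin x := sin_pos_of_mem_Ioo ⟨hx.1, by linarith [hx.2]⟩
  have hsin_y : 0 < sin y := sin_pos_of_mem_Ioo ⟨hy.1, by linarith [hy.2]⟩
  have hsin_xy : sin x ≤ sin y :=
    (sin_lt_sin_of_lt_of_le_pi_div_two (by linarith [hx.1]) hy.2 hxy).le
  have hu : 0 < (sin y - y * cos y) / y ^ 3 :=
    div_pos (sin_sub_mul_cos_pos hy.1 (hIoc hy).2) (pow_pos hy.1 3)
  have hA : 0 < upperWeight k y :=
    (one_div_thirty_lt_upperWeight hk hk' (Ioc_subset_Icc_self hy)).trans' (by norm_num)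
  have hprod : (sin y - y * cos y) / y ^ 3 * upperWeight k y <
      (sin x - x * cos x) / x ^ 3 * upperWeight k x :=
    mul_lt_mul'' (strictAntiOn_sin_sub_mul_cos_div_cube (hIoc hx) (hIoc hy) hxy)
      ((strictAntiOn_upperWeight hk) (Ioc_subset_Icc_self hx) (Ioc_subset_Icc_self hy) hxy)
      hu.le hA.le
  unfold upperGapDeriv2Quot
  gcongr ?_ - _
  calc _ < (sin x - x * cos x) / x ^ 3 * upperWeight k x / sin y ^ 2 :=
        div_lt_div_of_pos_right hprod (by positivity)
    _ ≤ _ := div_le_div_of_nonneg_left ((mul_pos hu hA).trans hprod).le (by positivity) (by gcongr)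

lemma continuousOn_upperGapDeriv2Quot (k : ℝ) : ContinuousOn (upperGapDeriv2Quot k) (Ioo 0 π) :=
  ContinuousOn.sub (ContinuousOn.div (ContinuousOn.mul (ContinuousOn.div (by fun_prop)
    (by fun_prop) fun x hx ↦ (pow_pos hx.1 3).ne') (by unfold upperWeight; fun_prop))
    (by fun_prop) fun x hx ↦ pow_ne_zero 2 (sin_pos_of_mem_Ioo hx).ne') continuousOn_const

lemma sin_sub_mul_cos_div_cube_pi_div_two :
    (sin (π / 2) - π / 2 * cos (π / 2)) / (π / 2) ^ 3 = 8 / π ^ 3 := by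
  rw [sin_pi_div_two, cos_pi_div_two]
  ring

lemma upperGapDeriv2Quot_one_div_four_pos (hk : 0 < k) (hk' : k < 1 / 32) :
    0 < upperGapDeriv2Quot k (1 / 4) := by
  have hπ₁ := pi_gt_three
  have hπ₂ := pi_lt_d2
  have hcube : π ^ 3 < 3.15 ^ 3 := pow_lt_pow_left₀ hπ₂ pi_pos.le (by norm_num)
  have hu : 1 / 4 < (sin (1 / 4) - 1 / 4 * cos (1 / 4)) / (1 / 4) ^ 3 :=
    calc (1 / 4 : ℝ) < 8 / π ^ 3 := by rw [lt_div_iff₀ (by positivity)]; linarith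
      _ = _ := sin_sub_mul_cos_div_cube_pi_div_two.symm
      _ < _ := strictAntiOn_sin_sub_mul_cos_div_cube ⟨by norm_num, by linarith⟩
          ⟨by linarith, by linarith⟩ (by linarith)
  have hA := one_div_thirty_lt_upperWeight hk hk' (x := 1 / 4) ⟨by norm_num, by linarith⟩
  have hsin₀ : 0 < sin (1 / 4) := sin_pos_of_mem_Ioo ⟨by norm_num, by linarith⟩
  have hsin : sin (1 / 4) < 1 / 4 := sin_lt (by norm_num)
  have hprod := mul_lt_mul'' hu hA (by norm_num) (by norm_num)
  rw [upperGapDeriv2Quot, sub_pos, lt_div_iff₀ (by positivity)]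
  nlinarith

lemma upperGapDeriv2Quot_pi_div_two_neg (hk : 1 / 40 < k) (hk' : k < 1 / 32) :
    upperGapDeriv2Quot k (π / 2) < 0 := by
  have hπ₁ := pi_gt_d2
  have hπ₂ := pi_lt_d2
  have hcube : 3 ^ 3 < π ^ 3 := pow_lt_pow_left₀ pi_gt_three (by norm_num) (by norm_num)
  have hu : 8 / π ^ 3 < 1 / 2 := by rw [div_lt_iff₀ (by positivity)]; linarith
  have hA : 1 / 3 - 3 * k * π < 1 / 10 := by nlinarith
  have hA₀ : 0 < 1 / 3 - 3 * k * π := by nlinarith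
  rw [upperGapDeriv2Quot, sin_sub_mul_cos_div_cube_pi_div_two, upperWeight_pi_div_two,
    sin_pi_div_two]
  nlinarith [mul_lt_mul'' hu hA (by positivity) hA₀.le]

lemma upperGapDeriv2_posThenNeg (hk : 1 / 40 < k) (hk' : k < 1 / 32) :
    PosThenNeg (upperGapDeriv2 k) 0 (π / 2) := by
  have hπ₁ := pi_gt_three
  have hk₀ : 0 < k := by linarith
  have hIoo : Ioo 0 (π / 2) ⊆ Ioo 0 π := fun x hx ↦ ⟨hx.1, by linarith [hx.2]⟩
  have hcont : ContinuousOn (upperGapDeriv2Quot k) (Icc (1 / 4) (π / 2)) :=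
    (continuousOn_upperGapDeriv2Quot k).mono fun x hx ↦ ⟨by linarith [hx.1], by linarith [hx.2]⟩
  refine ((strictAntiOn_upperGapDeriv2Quot hk₀ hk').posThenNeg ⟨by norm_num, by linarith⟩ hcont
    (upperGapDeriv2Quot_one_div_four_pos hk₀ hk') (upperGapDeriv2Quot_pi_div_two_neg hk hk')
    ).of_eqOn_mul (w := fun x ↦ x ^ 3 * sin x ^ 2)
    (fun x hx ↦ by have := sin_pos_of_mem_Ioo (hIoo hx); have := hx.1; positivity) fun x hx ↦ ?_
  have := (sin_pos_of_mem_Ioo (hIoo hx)).ne'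
  have := hx.1.ne'
  simp only [upperGapDeriv2, upperGapDeriv2Quot]
  field_simp

lemma upperGapDeriv_posThenNeg (hk : 1 / 40 < k) (hk' : k < 1 / 32) :
    PosThenNeg (upperGapDeriv k) 0 (π / 2) := by
  have hπ₁ := pi_gt_d2
  have hπ₂ := pi_lt_d2
  refine (upperGapDeriv2_posThenNeg hk hk').of_hasDerivAt
    (HasDerivAt.continuousOn fun x _ ↦ hasDerivAt_upperGapDeriv k x)
    (fun x _ ↦ hasDerivAt_upperGapDeriv k x) (by simp [upperGapDeriv]) ?_
  simp only [upperGapDeriv, cos_pi_div_two, sin_pi_div_two]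
  nlinarith

lemma upperGap_pos {x : ℝ} (hx : x ∈ Ioo 0 (π / 2)) : 0 < upperGap upperCoeff x := by
  obtain ⟨hk, hk'⟩ := upperCoeff_mem_Ioo
  refine (upperGapDeriv_posThenNeg hk hk').pos_of_hasDerivAt
    (HasDerivAt.continuousOn fun x _ ↦ hasDerivAt_upperGap _ x)
    (fun x _ ↦ hasDerivAt_upperGap _ x) (by simp [upperGap]) (le_of_eq ?_) x hx
  have := pi_pos.ne'
  simp only [upperGap, upperCoeff, cos_pi_div_two, sin_pi_div_two]
  field_simp
  ring

end UpperBound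

theorem best_of_theorems (x : ℝ) (hx : 0 < x) (hx' : x < π / 2) :
    (2 + cos x) / 3 - (2 / 3 - 2 / π) * ((π / 2 - 1)⁻¹ * (x - sin x)) < sin x / x ∧
    sin x / x < (2 + cos x) / 3 - (2 / 3 - 2 / π) * (sin x - x * cos x) ^ 2 := by
  have hpi : π / 2 - 1 ≠ 0 := by linarith [pi_gt_three]
  refine ⟨sub_pos.1 ?_, sub_pos.1 ?_⟩
  · calc 0 < lowerGap lowerCoeff x / x := div_pos (lowerGap_pos ⟨hx, hx'⟩) hx
      _ = _ := by rw [lowerGap, lowerCoeff, upperCoeff]; field_simp; ring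
  · calc 0 < upperGap upperCoeff x / x := div_pos (upperGap_pos ⟨hx, hx'⟩) hx
      _ = _ := by rw [upperGap, upperCoeff]; field_simp
end

section
/- The function Q(x) := (3·sin x − 2x − x·cos x)/x⁵ is negative and strictly increasing on the open interval (0, π/2). -/
open Real Set

/-!
Write `N x = 3 sin x - 2x - x cos x`, so that `x⁶ Q'(x) = g x := x N'(x) - 5 N(x)`.
Differentiating, `N'' x = -(sin x - x cos x)` and `g''' x = x (sin x - x cos x)`, while
`sin x - x cos x` has derivative `x sin x > 0` on `(0, π)`. Since `N, N'` and `g, g', g''` all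
vanish at `0`, integrating up from `0` gives `N < 0` (the Cusa–Huygens inequality) and `g > 0`
on `(0, π)`.
-/

lemma pos_on_Ioo_of_hasDerivAt_pos {f f' : ℝ → ℝ} {a b : ℝ} (hf : ∀ x, HasDerivAt f (f' x) x)
    (ha : f a = 0) (hf' : ∀ x ∈ Ioo a b, 0 < f' x) : ∀ x ∈ Ioo a b, 0 < f x := by
  intro x hx
  have hmono : StrictMonoOn f (Ico a b) :=
    strictMonoOn_of_hasDerivWithinAt_pos (convex_Ico a b)
      (fun y _ => (hf y).continuousAt.continuousWithinAt)
      (fun y _ => (hf y).hasDerivWithinAt) (by simpa using hf')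
  simpa [ha] using hmono (left_mem_Ico.2 (hx.1.trans hx.2)) (Ioo_subset_Ico_self hx) hx.1

lemma mul_cos_lt_sin {x : ℝ} (hx : x ∈ Ioo 0 π) : x * cos x < sin x := by
  have hderiv (y : ℝ) : HasDerivAt (fun y => sin y - y * cos y) (y * sin y) y :=
    ((hasDerivAt_sin y).sub ((hasDerivAt_id' y).mul (hasDerivAt_cos y))).congr_deriv (by ring)
  have := pos_on_Ioo_of_hasDerivAt_pos hderiv (by simp)
    (fun y hy => mul_pos hy.1 (sin_pos_of_pos_of_lt_pi hy.1 hy.2)) x hx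
  linarith

lemma three_mul_sin_lt {x : ℝ} (hx : x ∈ Ioo 0 π) : 3 * sin x < 2 * x + x * cos x := by
  have hderiv₁ (y : ℝ) : HasDerivAt (fun y => 2 - 2 * cos y - y * sin y)
      (sin y - y * cos y) y :=
    ((((hasDerivAt_cos y).const_mul 2).const_sub 2).sub
      ((hasDerivAt_id' y).mul (hasDerivAt_sin y))).congr_deriv (by ring)
  have hderiv₀ (y : ℝ) : HasDerivAt (fun y => 2 * y + y * cos y - 3 * sin y)
      (2 - 2 * cos y - y * sin y) y :=
    ((((hasDerivAt_id' y).const_mul 2).add ((hasDerivAt_id' y).mul (hasDerivAt_cos y))).sub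
      ((hasDerivAt_sin y).const_mul 3)).congr_deriv (by ring)
  have h₁ := pos_on_Ioo_of_hasDerivAt_pos hderiv₁ (by simp)
    (fun y hy => sub_pos.2 (mul_cos_lt_sin hy))
  have := pos_on_Ioo_of_hasDerivAt_pos hderiv₀ (by simp) h₁ x hx
  linarith

lemma Q_deriv_numerator_pos {x : ℝ} (hx : x ∈ Ioo 0 π) :
    0 < 7 * x * cos x + 8 * x + x ^ 2 * sin x - 15 * sin x := by
  have hderiv₂ (y : ℝ) : HasDerivAt (fun y => 3 * sin y - 3 * y * cos y - y ^ 2 * sin y)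
      (y * (sin y - y * cos y)) y :=
    ((((hasDerivAt_sin y).const_mul 3).sub
      (((hasDerivAt_id' y).const_mul 3).mul (hasDerivAt_cos y))).sub
      ((hasDerivAt_pow 2 y).mul (hasDerivAt_sin y))).congr_deriv (by push_cast; ring)
  have hderiv₁ (y : ℝ) : HasDerivAt (fun y => 8 - 8 * cos y - 5 * y * sin y + y ^ 2 * cos y)
      (3 * sin y - 3 * y * cos y - y ^ 2 * sin y) y :=
    (((((hasDerivAt_cos y).const_mul 8).const_sub 8).sub
      (((hasDerivAt_id' y).const_mul 5).mul (hasDerivAt_sin y))).add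
      ((hasDerivAt_pow 2 y).mul (hasDerivAt_cos y))).congr_deriv (by push_cast; ring)
  have hderiv₀ (y : ℝ) : HasDerivAt (fun y => 7 * y * cos y + 8 * y + y ^ 2 * sin y - 15 * sin y)
      (8 - 8 * cos y - 5 * y * sin y + y ^ 2 * cos y) y :=
    (((((hasDerivAt_id' y).const_mul 7).mul (hasDerivAt_cos y)).add
      ((hasDerivAt_id' y).const_mul 8)).add ((hasDerivAt_pow 2 y).mul (hasDerivAt_sin y))).sub
      ((hasDerivAt_sin y).const_mul 15) |>.congr_deriv (by push_cast; ring)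
  have h₂ := pos_on_Ioo_of_hasDerivAt_pos hderiv₂ (by simp)
    (fun y hy => mul_pos hy.1 (sub_pos.2 (mul_cos_lt_sin hy)))
  have h₁ := pos_on_Ioo_of_hasDerivAt_pos hderiv₁ (by simp) h₂
  exact pos_on_Ioo_of_hasDerivAt_pos hderiv₀ (by simp) h₁ x hx

lemma hasDerivAt_Q {x : ℝ} (hx : x ≠ 0) :
    HasDerivAt (fun x : ℝ => (3 * sin x - 2 * x - x * cos x) / x ^ 5)
      ((7 * x * cos x + 8 * x + x ^ 2 * sin x - 15 * sin x) / x ^ 6) x := by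
  have hnum : HasDerivAt (fun x => 3 * sin x - 2 * x - x * cos x) (2 * cos x - 2 + x * sin x) x :=
    ((((hasDerivAt_sin x).const_mul 3).sub ((hasDerivAt_id' x).const_mul 2)).sub
      ((hasDerivAt_id' x).mul (hasDerivAt_cos x))).congr_deriv (by ring)
  exact (hnum.div (hasDerivAt_pow 5 x) (pow_ne_zero 5 hx)).congr_deriv
    (by field_simp; push_cast; ring)

lemma Q_strictMonoOn_Ioo_pi :
    StrictMonoOn (fun x : ℝ => (3 * sin x - 2 * x - x * cos x) / x ^ 5) (Ioo 0 π) :=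
  strictMonoOn_of_hasDerivWithinAt_pos (convex_Ioo 0 π)
    (fun x hx => (hasDerivAt_Q hx.1.ne').continuousAt.continuousWithinAt)
    (fun x hx => (hasDerivAt_Q (interior_subset hx).1.ne').hasDerivWithinAt)
    (fun x hx => by
      rw [interior_Ioo] at hx
      exact div_pos (Q_deriv_numerator_pos hx) (pow_pos hx.1 6))

theorem Q_neg_strictMonoOn :
    (∀ x ∈ Ioo 0 (π / 2), (3 * sin x - 2 * x - x * cos x) / x ^ 5 < 0) ∧
    StrictMonoOn (fun x : ℝ => (3 * sin x - 2 * x - x * cos x) / x ^ 5) (Ioo 0 (π / 2)) := by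
  have hsub : Ioo 0 (π / 2) ⊆ Ioo 0 π := Ioo_subset_Ioo_right (by linarith [pi_pos])
  refine ⟨fun x hx => div_neg_of_neg_of_pos ?_ (pow_pos hx.1 5), Q_strictMonoOn_Ioo_pi.mono hsub⟩
  linarith [three_mul_sin_lt (hsub hx)]
end

section
/- The function f(x) := ((sin x)/x − (2 + cos x)/3)/(x − sin x), equivalently f(x) = (3·sin x − x·cos x − 2x)/(3x² − 3x·sin x), is strictly decreasing on the open interval (0, π/2). -/
/-!
Three applications of the monotone form of l'Hôpital's rule: if `f a = g a = 0`, `g' > 0` and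
`f' / g'` is strictly decreasing on `(a, b)`, then so is `f / g`. Writing
`f x = (3 sin x - x cos x - 2x) / (3x² - 3x sin x)`, numerator and denominator vanish at `0`, and
so do those of the first two derivative quotients; the third quotient is
`-x sin x / (9 sin x + 3x cos x)`, which is decreasing by the addition formula for `sin (y - x)`.
-/

open Real Set

section MonotoneLHopital

variable {f g f' g' : ℝ → ℝ} {a b : ℝ}

lemma strictMonoOn_Ico_of_hasDerivAt_pos (hgc : ContinuousOn g (Ico a b))
    (hg : ∀ x ∈ Ioo a b, HasDerivAt g (g' x) x) (hg' : ∀ x ∈ Ioo a b, 0 < g' x) :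
    StrictMonoOn g (Ico a b) :=
  strictMonoOn_of_deriv_pos (convex_Ico a b) hgc fun x hx => by
    rw [interior_Ico] at hx
    rw [(hg x hx).deriv]
    exact hg' x hx

lemma exists_mem_Ioo_div_sub_eq_deriv_div
    (hfc : ContinuousOn f (Ico a b)) (hgc : ContinuousOn g (Ico a b))
    (hf : ∀ x ∈ Ioo a b, HasDerivAt f (f' x) x) (hg : ∀ x ∈ Ioo a b, HasDerivAt g (g' x) x)
    (hg' : ∀ x ∈ Ioo a b, 0 < g' x) {u v : ℝ} (hu : a ≤ u) (huv : u < v) (hv : v < b) :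
    ∃ c ∈ Ioo u v, (f v - f u) / (g v - g u) = f' c / g' c := by
  have hsub : Icc u v ⊆ Ico a b := Icc_subset_Ico hu hv
  have hIoo : ∀ x ∈ Ioo u v, x ∈ Ioo a b := fun x hx => ⟨hu.trans_lt hx.1, hx.2.trans hv⟩
  have hgvu : 0 < g v - g u := sub_pos.2 <| strictMonoOn_Ico_of_hasDerivAt_pos hgc hg hg'
    (hsub (left_mem_Icc.2 huv.le)) (hsub (right_mem_Icc.2 huv.le)) huv
  obtain ⟨c, hc, hcauchy⟩ := exists_ratio_hasDerivAt_eq_ratio_slope f f' huv (hfc.mono hsub)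
    (fun x hx => hf x (hIoo x hx)) g g' (hgc.mono hsub) (fun x hx => hg x (hIoo x hx))
  refine ⟨c, hc, ?_⟩
  rw [div_eq_div_iff hgvu.ne' (hg' c (hIoo c hc)).ne']
  linarith

theorem StrictAntiOn.div_of_deriv_div (h : StrictAntiOn (fun x => f' x / g' x) (Ioo a b))
    (hfc : ContinuousOn f (Ico a b)) (hgc : ContinuousOn g (Ico a b))
    (hf : ∀ x ∈ Ioo a b, HasDerivAt f (f' x) x) (hg : ∀ x ∈ Ioo a b, HasDerivAt g (g' x) x)
    (hfa : f a = 0) (hga : g a = 0) (hg' : ∀ x ∈ Ioo a b, 0 < g' x) :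
    StrictAntiOn (fun x => f x / g x) (Ioo a b) := by
  intro x hx y hy hxy
  obtain ⟨c, hc, hfgx⟩ := exists_mem_Ioo_div_sub_eq_deriv_div hfc hgc hf hg hg' le_rfl hx.1 hx.2
  obtain ⟨d, hd, hfgxy⟩ :=
    exists_mem_Ioo_div_sub_eq_deriv_div hfc hgc hf hg hg' hx.1.le hxy hy.2
  rw [hfa, hga, sub_zero, sub_zero] at hfgx
  have hcd : f' d / g' d < f' c / g' c :=
    h ⟨hc.1, hc.2.trans hx.2⟩ ⟨hx.1.trans hd.1, hd.2.trans hy.2⟩ (hc.2.trans hd.1)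
  have hg_mono := strictMonoOn_Ico_of_hasDerivAt_pos hgc hg hg'
  have hgx : 0 < g x :=
    hga ▸ hg_mono (left_mem_Ico.2 (hx.1.trans hx.2)) (Ioo_subset_Ico_self hx) hx.1
  have hgxy : 0 < g y - g x :=
    sub_pos.2 (hg_mono (Ioo_subset_Ico_self hx) (Ioo_subset_Ico_self hy) hxy)
  -- the slope of `f` against `g` on `[x, y]` is below the one on `[a, x]`, which is `f x / g x`
  rw [← hfgx, ← hfgxy, div_lt_div_iff₀ hgxy hgx] at hcd
  show f y / g y < f x / g x
  rw [div_lt_div_iff₀ (hgx.trans (sub_pos.1 hgxy)) hgx]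
  linarith

end MonotoneLHopital

lemma six_mul_sub_three_mul_sin_sub_mul_cos_pos {x : ℝ} (hx : 0 < x) :
    0 < 6 * x - 3 * sin x - 3 * x * cos x := by
  nlinarith [sin_lt hx, cos_le_one x]

lemma six_sub_six_mul_cos_add_mul_sin_pos {x : ℝ} (hx0 : 0 < x) (hxπ : x < π) :
    0 < 6 - 6 * cos x + 3 * x * sin x := by
  nlinarith [cos_le_one x, mul_pos hx0 (sin_pos_of_pos_of_lt_pi hx0 hxπ)]

lemma nine_mul_sin_add_mul_cos_pos {x : ℝ} (hx : x ∈ Ioo 0 (π / 2)) :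
    0 < 9 * sin x + 3 * x * cos x := by
  have hsin := sin_pos_of_pos_of_lt_pi hx.1 (by linarith [hx.2, pi_pos])
  have hcos := cos_pos_of_mem_Ioo ⟨by linarith [hx.1, pi_pos], hx.2⟩
  nlinarith [mul_pos hx.1 hcos]

lemma strictAntiOn_neg_mul_sin_div :
    StrictAntiOn (fun x => -(x * sin x) / (9 * sin x + 3 * x * cos x)) (Ioo 0 (π / 2)) := by
  intro x hx y hy hxy
  have hsx : 0 < sin x := sin_pos_of_pos_of_lt_pi hx.1 (by linarith [hx.2, pi_pos])
  have hsy : 0 < sin y := sin_pos_of_pos_of_lt_pi hy.1 (by linarith [hy.2, pi_pos])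
  have hsyx : 0 < sin y * cos x - cos y * sin x := by
    rw [← sin_sub]
    exact sin_pos_of_pos_of_lt_pi (by linarith) (by linarith [hx.1, hy.2, pi_pos])
  show -(y * sin y) / (9 * sin y + 3 * y * cos y) < -(x * sin x) / (9 * sin x + 3 * x * cos x)
  rw [div_lt_div_iff₀ (nine_mul_sin_add_mul_cos_pos hy) (nine_mul_sin_add_mul_cos_pos hx)]
  nlinarith [mul_pos (mul_pos hx.1 hy.1) hsyx, mul_pos (mul_pos hsx hsy) (sub_pos.2 hxy)]

lemma hasDerivAt_mul_cos_sub_sin (x : ℝ) :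
    HasDerivAt (fun x => x * cos x - sin x) (-(x * sin x)) x :=
  (((hasDerivAt_id' x).mul (hasDerivAt_cos x)).sub (hasDerivAt_sin x)).congr_deriv (by ring)

lemma hasDerivAt_six_sub_six_mul_cos_add_mul_sin (x : ℝ) :
    HasDerivAt (fun x => 6 - 6 * cos x + 3 * x * sin x) (9 * sin x + 3 * x * cos x) x :=
  ((((hasDerivAt_cos x).const_mul 6).const_sub 6).add
    (((hasDerivAt_id' x).const_mul 3).mul (hasDerivAt_sin x))).congr_deriv (by ring)

lemma hasDerivAt_two_mul_cos_add_mul_sin_sub_two (x : ℝ) :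
    HasDerivAt (fun x => 2 * cos x + x * sin x - 2) (x * cos x - sin x) x :=
  (((((hasDerivAt_cos x).const_mul 2).add
    ((hasDerivAt_id' x).mul (hasDerivAt_sin x))).sub_const 2)).congr_deriv (by ring)

lemma hasDerivAt_six_mul_sub_three_mul_sin_sub_mul_cos (x : ℝ) :
    HasDerivAt (fun x => 6 * x - 3 * sin x - 3 * x * cos x) (6 - 6 * cos x + 3 * x * sin x) x :=
  ((((hasDerivAt_id' x).const_mul 6).sub ((hasDerivAt_sin x).const_mul 3)).sub
    (((hasDerivAt_id' x).const_mul 3).mul (hasDerivAt_cos x))).congr_deriv (by ring)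

lemma hasDerivAt_three_mul_sin_sub_mul_cos_sub_two_mul (x : ℝ) :
    HasDerivAt (fun x => 3 * sin x - x * cos x - 2 * x) (2 * cos x + x * sin x - 2) x :=
  ((((hasDerivAt_sin x).const_mul 3).sub ((hasDerivAt_id' x).mul (hasDerivAt_cos x))).sub
    ((hasDerivAt_id' x).const_mul 2)).congr_deriv (by ring)

lemma hasDerivAt_three_mul_sq_sub_mul_sin (x : ℝ) :
    HasDerivAt (fun x => 3 * x ^ 2 - 3 * x * sin x) (6 * x - 3 * sin x - 3 * x * cos x) x :=
  (((hasDerivAt_pow 2 x).const_mul 3).sub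
    (((hasDerivAt_id' x).const_mul 3).mul (hasDerivAt_sin x))).congr_deriv (by ring)

lemma sin_div_sub_div_div_sub_sin_eq {x : ℝ} (hx : 0 < x) :
    (sin x / x - (2 + cos x) / 3) / (x - sin x) =
      (3 * sin x - x * cos x - 2 * x) / (3 * x ^ 2 - 3 * x * sin x) := by
  have hsin : x - sin x ≠ 0 := (sub_pos.2 (sin_lt hx)).ne'
  field_simp
  ring

theorem f_strictAntiOn :
    StrictAntiOn (fun x : ℝ => (sin x / x - (2 + cos x) / 3) / (x - sin x)) (Ioo 0 (π / 2)) := by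
  have hπ : ∀ x ∈ Ioo 0 (π / 2), x < π := fun x hx => hx.2.trans (half_lt_self pi_pos)
  have hquot'' := strictAntiOn_neg_mul_sin_div.div_of_deriv_div (by fun_prop) (by fun_prop)
    (fun x _ => hasDerivAt_mul_cos_sub_sin x)
    (fun x _ => hasDerivAt_six_sub_six_mul_cos_add_mul_sin x) (by simp) (by simp)
    fun x hx => nine_mul_sin_add_mul_cos_pos hx
  have hquot' := hquot''.div_of_deriv_div (by fun_prop) (by fun_prop)
    (fun x _ => hasDerivAt_two_mul_cos_add_mul_sin_sub_two x)
    (fun x _ => hasDerivAt_six_mul_sub_three_mul_sin_sub_mul_cos x) (by simp) (by simp)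
    fun x hx => six_sub_six_mul_cos_add_mul_sin_pos hx.1 (hπ x hx)
  have hquot := hquot'.div_of_deriv_div (by fun_prop) (by fun_prop)
    (fun x _ => hasDerivAt_three_mul_sin_sub_mul_cos_sub_two_mul x)
    (fun x _ => hasDerivAt_three_mul_sq_sub_mul_sin x) (by simp) (by simp)
    fun x hx => six_mul_sub_three_mul_sin_sub_mul_cos_pos hx.1
  exact hquot.congr fun x hx => (sin_div_sub_div_div_sub_sin_eq hx.1).symm
end

section
/- The function v(x) := 5x/tan x − x² + 3 is positive and strictly decreasing on the open interval (0, π/2). -/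
open Real Set

theorem v_pos_strictAntiOn :
    (∀ x ∈ Ioo 0 (π / 2), 0 < 5 * x / tan x - x ^ 2 + 3) ∧
    StrictAntiOn (fun x : ℝ => 5 * x / tan x - x ^ 2 + 3) (Ioo 0 (π / 2)) := by
  have hpi : (π : ℝ) / 2 < 1.6 := by
    have := Real.pi_lt_d2; linarith
  have hcos : ∀ x ∈ Ioo 0 (π / 2), 0 < cos x := fun x hx =>
    Real.cos_pos_of_mem_Ioo ⟨by linarith [hx.1, Real.pi_pos], hx.2⟩
  have htan : ∀ x ∈ Ioo 0 (π / 2), 0 < tan x := fun x hx =>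
    Real.tan_pos_of_pos_of_lt_pi_div_two hx.1 hx.2
  constructor
  · intro x hx
    have h1 : 0 < 5 * x / tan x := by
      have := htan x hx
      have := hx.1
      positivity
    have hx16 : x < 1.6 := lt_trans hx.2 hpi
    nlinarith [hx.1]
  · apply strictAntiOn_of_deriv_neg (convex_Ioo _ _)
    · apply ContinuousOn.add
      apply ContinuousOn.sub
      · exact (continuousOn_const.mul continuousOn_id).div
          (Real.continuousOn_tan.mono (fun x hx => (hcos x hx).ne'))
          (fun x hx => (htan x hx).ne')
      · exact continuousOn_pow 2
      · exact continuousOn_const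
    · intro x hx
      rw [interior_Ioo] at hx
      have hc := hcos x hx
      have ht := htan x hx
      have hx0 := hx.1
      have hder : HasDerivAt (fun x : ℝ => 5 * x / tan x - x ^ 2 + 3)
          ((5 * tan x - 5 * x * (1 / cos x ^ 2)) / tan x ^ 2 - 2 * x + 0) x := by
        have h1 : HasDerivAt (fun x : ℝ => 5 * x) 5 x := by
          simpa using (hasDerivAt_id x).const_mul (5 : ℝ)
        have h2 : HasDerivAt tan (1 / cos x ^ 2) x := Real.hasDerivAt_tan hc.ne'
        have h3 : HasDerivAt (fun x : ℝ => x ^ 2) (2 * x) x := by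
          simpa using hasDerivAt_pow 2 x
        exact ((h1.div h2 ht.ne').sub h3).add (hasDerivAt_const x 3)
      rw [hder.deriv]
      have hsin : sin (2 * x) < 2 * x := Real.sin_lt (by linarith)
      have hsc : sin x * cos x < x := by
        rw [Real.sin_two_mul] at hsin; linarith
      have hnum : 5 * tan x - 5 * x * (1 / cos x ^ 2) < 0 := by
        rw [Real.tan_eq_sin_div_cos]
        have h : 5 * (sin x / cos x) - 5 * x * (1 / cos x ^ 2)
            = 5 * (sin x * cos x - x) / cos x ^ 2 := by
          field_simp
        rw [h]
        apply div_neg_of_neg_of_pos (by linarith) (by positivity)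
      have : (5 * tan x - 5 * x * (1 / cos x ^ 2)) / tan x ^ 2 < 0 :=
        div_neg_of_neg_of_pos hnum (by positivity)
      linarith
end

section
/- For all real x with 0 < x < π/2, one has f₂(x) < 0, where f₂(x) := −8x(π − 3)·cos² x − πx(π − 2)²·cos x + ((−16π + 48)x² + 3π(π − 2)²)·sin x − 2π³x + 8πx³ + 8π²x − 24x³ − 24x. -/
/-!
Replace `sin` and `cos` in `f₂` by their alternating Taylor bounds, each obtained from the
previous one by integrating once. Near `0` this bounds `f₂ x` by `x ^ 5` times a cubic in `x ^ 2`,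
and near `π / 2`, with `y = π / 2 - x`, by `y` times a polynomial of degree six in `y`; the
coefficients are polynomials in `π`. With six-digit bounds on `π`, the first polynomial is
negative for `x ≤ 1.35` and the second for `y ≤ 0.221`, and these two ranges cover `(0, π / 2)`.
-/

open Real

lemma nonneg_of_deriv_nonneg_of_map_zero {f : ℝ → ℝ} (hf : Differentiable ℝ f) (h₀ : f 0 = 0)
    (hf' : ∀ t, 0 ≤ t → 0 ≤ deriv f t) {x : ℝ} (hx : 0 ≤ x) : 0 ≤ f x := by
  have hmono : MonotoneOn f (Set.Ici 0) :=
    monotoneOn_of_deriv_nonneg (convex_Ici 0) hf.continuous.continuousOn hf.differentiableOn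
      (fun t ht ↦ hf' t (interior_subset ht))
  simpa [h₀] using hmono Set.self_mem_Ici hx hx

namespace Real

variable {x : ℝ}

theorem cos_le_one_sub_sq_add_pow_four (hx : 0 ≤ x) : cos x ≤ 1 - x ^ 2 / 2 + x ^ 4 / 24 := by
  have := nonneg_of_deriv_nonneg_of_map_zero (f := fun t ↦ 1 - t ^ 2 / 2 + t ^ 4 / 24 - cos t)
    (by fun_prop) (by simp) (fun t ht ↦ by
      simp (disch := fun_prop) only [deriv_fun_sub, deriv_fun_add, deriv_const', deriv_id'',
        deriv_div_const, deriv_fun_pow, deriv_cos', Nat.cast_ofNat, Nat.add_one_sub_one, pow_one]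
      linarith [sin_ge_sub_cube ht]) hx
  linarith

theorem sin_le_sub_cube_add_pow_five (hx : 0 ≤ x) : sin x ≤ x - x ^ 3 / 6 + x ^ 5 / 120 := by
  have := nonneg_of_deriv_nonneg_of_map_zero (f := fun t ↦ t - t ^ 3 / 6 + t ^ 5 / 120 - sin t)
    (by fun_prop) (by simp) (fun t ht ↦ by
      simp (disch := fun_prop) only [deriv_fun_sub, deriv_fun_add, deriv_id'', deriv_div_const,
        deriv_fun_pow, deriv_sin, Nat.cast_ofNat, Nat.add_one_sub_one]
      linarith [cos_le_one_sub_sq_add_pow_four ht]) hx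
  linarith

theorem one_sub_sq_add_pow_four_sub_pow_six_le_cos (hx : 0 ≤ x) :
    1 - x ^ 2 / 2 + x ^ 4 / 24 - x ^ 6 / 720 ≤ cos x := by
  have := nonneg_of_deriv_nonneg_of_map_zero
    (f := fun t ↦ cos t - (1 - t ^ 2 / 2 + t ^ 4 / 24 - t ^ 6 / 720))
    (by fun_prop) (by simp) (fun t ht ↦ by
      simp (disch := fun_prop) only [deriv_fun_sub, deriv_fun_add, deriv_const', deriv_id'',
        deriv_div_const, deriv_fun_pow, deriv_cos', Nat.cast_ofNat, Nat.add_one_sub_one, pow_one]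
      linarith [sin_le_sub_cube_add_pow_five ht]) hx
  linarith

lemma pi_sq_bounds : 9.8696 ≤ π ^ 2 ∧ π ^ 2 ≤ 9.869607 := by
  have := pi_gt_d6; have := pi_lt_d6
  constructor <;> nlinarith

lemma pi_cube_bounds : 31.00625 ≤ π ^ 3 ∧ π ^ 3 ≤ 31.00634 := by
  have := pi_gt_d6; have := pi_lt_d6; have := pi_sq_bounds
  constructor <;> nlinarith

lemma pi_pow_four_bounds : 97.409 ≤ π ^ 4 ∧ π ^ 4 ≤ 97.40915 := by
  obtain ⟨h₁, h₂⟩ := pi_sq_bounds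
  constructor <;> nlinarith

end Real

noncomputable def f₂ (x : ℝ) : ℝ :=
  -8 * x * (π - 3) * cos x ^ 2 - π * x * (π - 2) ^ 2 * cos x +
    ((-16 * π + 48) * x ^ 2 + 3 * π * (π - 2) ^ 2) * sin x -
    2 * π ^ 3 * x + 8 * π * x ^ 3 + 8 * π ^ 2 * x - 24 * x ^ 3 - 24 * x

/- After the Taylor substitution (at `x`, resp. at `π / 2 - y`, where `sin` and `cos` swap) all
terms of order below `x ^ 5`, resp. `y`, cancel, leaving these polynomials. -/
noncomputable def majorantNearZero (t : ℝ) : ℝ :=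
  (-π / 15 + π ^ 2 / 15 - π ^ 3 / 60) + t * (-2 / 3 + 41 * π / 180 - π ^ 2 / 180 + π ^ 3 / 720)
    + t ^ 2 * (1 / 15 - π / 45) + t ^ 3 * (-1 / 600 + π / 1800)

noncomputable def majorantNearPiDivTwo (y : ℝ) : ℝ :=
  (24 - 48 * π + 24 * π ^ 2 - 2 * π ^ 3 - π ^ 4 / 2)
    + y * (48 - 42 * π + 4 * π ^ 2 + 3 / 2 * π ^ 3)
    + y ^ 2 * (24 * π - 23 / 3 * π ^ 2 - π ^ 3 / 3 + π ^ 4 / 12)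
    + y ^ 3 * (-24 + 23 / 6 * π + 2 * π ^ 2 - 5 / 24 * π ^ 3)
    + y ^ 4 * (8 - 14 / 3 * π + 2 / 3 * π ^ 2) + y ^ 5 * (2 - π / 3 - π ^ 2 / 9)
    + y ^ 6 * (-2 / 3 + 2 / 9 * π)

lemma f₂_le_majorantNearZero {x : ℝ} (hx₀ : 0 ≤ x) (hx : x ≤ π / 2) :
    f₂ x ≤ x ^ 5 * majorantNearZero (x ^ 2) := by
  have := pi_gt_d6; have := pi_lt_d6
  have hsin₀ : 0 ≤ sin x := sin_nonneg_of_nonneg_of_le_pi hx₀ (by linarith)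
  have hsin := sin_le_sub_cube_add_pow_five hx₀
  have hcos := one_sub_sq_add_pow_four_sub_pow_six_le_cos hx₀
  have hA : 0 ≤ (-16 * π + 48) * x ^ 2 + 3 * π * (π - 2) ^ 2 := by nlinarith
  have e₁ : 0 ≤ 8 * x * (π - 3) * ((x - x ^ 3 / 6 + x ^ 5 / 120) ^ 2 - sin x ^ 2) :=
    mul_nonneg (mul_nonneg (by positivity) (by linarith)) (by nlinarith)
  have e₂ : 0 ≤ π * x * (π - 2) ^ 2 * (cos x - (1 - x ^ 2 / 2 + x ^ 4 / 24 - x ^ 6 / 720)) :=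
    mul_nonneg (by positivity) (by linarith)
  have e₃ : 0 ≤ ((-16 * π + 48) * x ^ 2 + 3 * π * (π - 2) ^ 2) *
      (x - x ^ 3 / 6 + x ^ 5 / 120 - sin x) :=
    mul_nonneg hA (by linarith)
  rw [f₂, majorantNearZero, cos_sq']
  linarith

lemma f₂_pi_div_two_sub_le_majorantNearPiDivTwo {y : ℝ} (hy₀ : 0 ≤ y) (hy : y ≤ π / 2) :
    f₂ (π / 2 - y) ≤ y * majorantNearPiDivTwo y := by
  have := pi_gt_d6; have := pi_lt_d6
  have hsin := sin_ge_sub_cube hy₀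
  have hcos := cos_le_one_sub_sq_add_pow_four hy₀
  have hsin₀ : 0 ≤ y - y ^ 3 / 6 := by nlinarith
  have hA : 0 ≤ (-16 * π + 48) * (π / 2 - y) ^ 2 + 3 * π * (π - 2) ^ 2 := by
    nlinarith [sq_nonneg (π / 2 - y)]
  have e₁ : 0 ≤ 8 * (π / 2 - y) * (π - 3) * (sin y ^ 2 - (y - y ^ 3 / 6) ^ 2) :=
    mul_nonneg (mul_nonneg (by linarith) (by linarith)) (by nlinarith)
  have e₂ : 0 ≤ π * (π / 2 - y) * (π - 2) ^ 2 * (sin y - (y - y ^ 3 / 6)) :=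
    mul_nonneg (mul_nonneg (mul_nonneg pi_pos.le (by linarith)) (sq_nonneg _)) (by linarith)
  have e₃ : 0 ≤ ((-16 * π + 48) * (π / 2 - y) ^ 2 + 3 * π * (π - 2) ^ 2) *
      (1 - y ^ 2 / 2 + y ^ 4 / 24 - cos y) :=
    mul_nonneg hA (by linarith)
  rw [f₂, majorantNearPiDivTwo, sin_pi_div_two_sub, cos_pi_div_two_sub]
  linarith

lemma majorantNearZero_neg {t : ℝ} (ht₀ : 0 ≤ t) (ht : t ≤ 1.8225) :
    majorantNearZero t < 0 := by
  have := pi_gt_d6; have := pi_lt_d6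
  obtain ⟨_, _⟩ := pi_sq_bounds; obtain ⟨_, _⟩ := pi_cube_bounds
  have hc₁ : -2 / 3 + 41 * π / 180 - π ^ 2 / 180 + π ^ 3 / 720 ≤ 0.03716 := by linarith
  have hc₂ : 1 / 15 - π / 45 ≤ -0.003146 := by linarith
  have hc₃ : -1 / 600 + π / 1800 ≤ 0.000079 := by linarith
  unfold majorantNearZero
  nlinarith [mul_le_mul_of_nonneg_left hc₁ ht₀, mul_le_mul_of_nonneg_left hc₂ (sq_nonneg t),
    mul_le_mul_of_nonneg_left hc₃ (pow_nonneg ht₀ 3), mul_nonneg ht₀ (sub_nonneg.2 ht),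
    mul_nonneg (pow_nonneg ht₀ 2) (sub_nonneg.2 ht)]

lemma majorantNearPiDivTwo_neg {y : ℝ} (hy₀ : 0 ≤ y) (hy : y ≤ 0.221) :
    majorantNearPiDivTwo y < 0 := by
  have := pi_gt_d6; have := pi_lt_d6
  obtain ⟨_, _⟩ := pi_sq_bounds; obtain ⟨_, _⟩ := pi_cube_bounds
  obtain ⟨_, _⟩ := pi_pow_four_bounds
  have hc₁ : 48 - 42 * π + 4 * π ^ 2 + 3 / 2 * π ^ 3 ≤ 2.042 := by linarith
  have hc₂ : 24 * π - 23 / 3 * π ^ 2 - π ^ 3 / 3 + π ^ 4 / 12 ≤ 0 := by linarith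
  have hc₃ : -24 + 23 / 6 * π + 2 * π ^ 2 - 5 / 24 * π ^ 3 ≤ 1.33 := by linarith
  have hc₄ : 8 - 14 / 3 * π + 2 / 3 * π ^ 2 ≤ 0 := by linarith
  have hc₅ : 2 - π / 3 - π ^ 2 / 9 ≤ 0 := by linarith
  have hc₆ : -2 / 3 + 2 / 9 * π ≤ 0.032 := by linarith
  have hy₃ : y ^ 3 ≤ 0.0108 := by nlinarith [pow_le_pow_left₀ hy₀ hy 3]
  have hy₆ : y ^ 6 ≤ 0.00012 := by nlinarith [pow_le_pow_left₀ hy₀ hy 6]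
  unfold majorantNearPiDivTwo
  linarith [mul_le_mul_of_nonneg_left hc₁ hy₀, mul_le_mul_of_nonneg_left hc₂ (sq_nonneg y),
    mul_le_mul_of_nonneg_left hc₃ (pow_nonneg hy₀ 3),
    mul_le_mul_of_nonneg_left hc₄ (pow_nonneg hy₀ 4),
    mul_le_mul_of_nonneg_left hc₅ (pow_nonneg hy₀ 5),
    mul_le_mul_of_nonneg_left hc₆ (pow_nonneg hy₀ 6)]

theorem f2_neg (x : ℝ) (hx : 0 < x) (hx' : x < π / 2) :
    -8 * x * (π - 3) * cos x ^ 2 - π * x * (π - 2) ^ 2 * cos x +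
        ((-16 * π + 48) * x ^ 2 + 3 * π * (π - 2) ^ 2) * sin x -
        2 * π ^ 3 * x + 8 * π * x ^ 3 + 8 * π ^ 2 * x - 24 * x ^ 3 - 24 * x < 0 := by
  change f₂ x < 0
  have hπ := pi_lt_d6
  rcases le_or_gt x 1.35 with hx₁ | hx₁
  · calc f₂ x ≤ x ^ 5 * majorantNearZero (x ^ 2) := f₂_le_majorantNearZero hx.le hx'.le
      _ < 0 := mul_neg_of_pos_of_neg (by positivity)
        (majorantNearZero_neg (sq_nonneg x) (by nlinarith))
  · calc f₂ x = f₂ (π / 2 - (π / 2 - x)) := by rw [sub_sub_cancel]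
      _ ≤ (π / 2 - x) * majorantNearPiDivTwo (π / 2 - x) :=
        f₂_pi_div_two_sub_le_majorantNearPiDivTwo (by linarith) (by linarith)
      _ < 0 := mul_neg_of_pos_of_neg (by linarith)
        (majorantNearPiDivTwo_neg (by linarith) (by linarith))
end

section
/- The sequence c_k := (a_k)/(b_k), where a_k := (4·|B_{2k+2}|/(2k+2)!)·(2k·2^(2k) − 2·2^(2k) + k + 2) and b_k := (3·|B_{2k}|/(2k)!)·(2k·2^(2k) − 3·2^(2k) + 4), is strictly decreasing for integers k ≥ 2; that is, c_{k+1} < c_k for all k ≥ 2. -/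
/-!
Since `|B_{2k}| / (2k)! = 2 ζ(2k) / (2π)^{2k}`, the ratio is
`c_k = ζ(2k+2) P(k) / (3π² ζ(2k) Q(k))` with `P`, `Q` the polynomial factors, so `c_{k+1} < c_k`
amounts to `ζ(2k+4) ζ(2k) P(k+1) Q(k) < ζ(2k+2)² P(k) Q(k+1)`. As `ζ(2k+4) ≤ ζ(2k+2)` and
`1 ≤ ζ(2k+2)`, it suffices to know `ζ(2k) ≤ 1 + 2/4^k`, which follows from
`ζ(2k) - 1 ≤ (ζ(4) - 1) / 4^(k-2)` and `ζ(4) = π⁴/90`; what remains is a polynomial inequality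
in `k` and `x = 4^k`, true as soon as `4k² ≤ x`.
-/

open Real Nat

noncomputable section

/-- `zetaEven k = ζ(2k)`. -/
def zetaEven (k : ℕ) : ℝ := ∑' n : ℕ, 1 / (n : ℝ) ^ (2 * k)

lemma hasSum_zetaEven {k : ℕ} (hk : k ≠ 0) :
    HasSum (fun n : ℕ => 1 / (n : ℝ) ^ (2 * k)) (zetaEven k) :=
  (hasSum_zeta_nat hk).summable.hasSum

lemma summable_one_div_add_two_pow {k : ℕ} (hk : k ≠ 0) :
    Summable (fun n : ℕ => 1 / ((n : ℝ) + 2) ^ (2 * k)) := by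
  simpa using (summable_nat_add_iff 2).2 (hasSum_zetaEven hk).summable

lemma zetaEven_eq_one_add_tsum {k : ℕ} (hk : k ≠ 0) :
    zetaEven k = 1 + ∑' n : ℕ, 1 / ((n : ℝ) + 2) ^ (2 * k) := by
  rw [zetaEven, ← (hasSum_zetaEven hk).summable.sum_add_tsum_nat_add 2]
  simp [Finset.sum_range_succ, hk]

lemma one_le_zetaEven {k : ℕ} (hk : k ≠ 0) : 1 ≤ zetaEven k := by
  rw [zetaEven_eq_one_add_tsum hk]
  exact le_add_of_nonneg_right (tsum_nonneg fun n => by positivity)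

lemma zetaEven_add_sub_one_le {k : ℕ} (hk : k ≠ 0) (j : ℕ) :
    zetaEven (k + j) - 1 ≤ (zetaEven k - 1) / 4 ^ j := by
  rw [zetaEven_eq_one_add_tsum hk, zetaEven_eq_one_add_tsum (by omega), add_sub_cancel_left,
    add_sub_cancel_left, div_eq_inv_mul, ← tsum_mul_left]
  refine Summable.tsum_le_tsum (fun n => ?_) (summable_one_div_add_two_pow (by omega))
    ((summable_one_div_add_two_pow hk).mul_left _)
  have h4 : (4 : ℝ) ^ j ≤ (((n : ℝ) + 2) ^ 2) ^ j := by gcongr; nlinarith [n.cast_nonneg (α := ℝ)]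
  calc 1 / ((n : ℝ) + 2) ^ (2 * (k + j))
        = 1 / (((n : ℝ) + 2) ^ (2 * k) * (((n : ℝ) + 2) ^ 2) ^ j) := by
          rw [← pow_mul, ← pow_add, mul_add]
    _ ≤ 1 / (((n : ℝ) + 2) ^ (2 * k) * 4 ^ j) := by gcongr
    _ = (4 ^ j)⁻¹ * (1 / ((n : ℝ) + 2) ^ (2 * k)) := by ring

lemma zetaEven_succ_le {k : ℕ} (hk : k ≠ 0) : zetaEven (k + 1) ≤ zetaEven k := by
  have h := zetaEven_add_sub_one_le hk 1
  have h1 := one_le_zetaEven hk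
  linarith

lemma zetaEven_two : zetaEven 2 = π ^ 4 / 90 := hasSum_zeta_four.tsum_eq

lemma zetaEven_le {k : ℕ} (hk : 2 ≤ k) : zetaEven k ≤ 1 + 2 / 4 ^ k := by
  obtain ⟨j, rfl⟩ := Nat.exists_eq_add_of_le hk
  have h := zetaEven_add_sub_one_le two_ne_zero j
  rw [zetaEven_two] at h
  have hπ : π ^ 4 < 3.15 ^ 4 := by gcongr; exact pi_lt_d2
  have htail : (π ^ 4 / 90 - 1) / 4 ^ j ≤ 2 / 4 ^ (2 + j) := by
    rw [pow_add, div_le_div_iff₀ (by positivity) (by positivity)]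
    nlinarith [pow_pos (by norm_num : (0 : ℝ) < 4) j]
  linarith

lemma abs_bernoulli_div_factorial {k : ℕ} (hk : k ≠ 0) :
    |(bernoulli (2 * k) : ℝ)| / (2 * k)! = 2 * zetaEven k / (2 * π) ^ (2 * k) := by
  have hζ : 2 * zetaEven k / (2 * π) ^ (2 * k) =
      (-1) ^ (k + 1) * ((bernoulli (2 * k) : ℝ) / (2 * k)!) := by
    have h2 : (2 : ℝ) ^ (2 * k) = 2 * 2 ^ (2 * k - 1) := by
      rw [← pow_succ' (2 : ℝ), Nat.sub_add_cancel (by omega)]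
    rw [(hasSum_zetaEven hk).unique (hasSum_zeta_nat hk), mul_pow, h2]
    field_simp
  have hpos : 0 < 2 * zetaEven k / (2 * π) ^ (2 * k) := by
    have := one_le_zetaEven hk
    positivity
  rw [← abs_of_pos hpos, hζ, abs_mul, abs_pow, abs_neg, abs_one, one_pow, one_mul, abs_div,
    Nat.abs_cast]

def numPoly (k : ℕ) : ℝ := 2 * k * 2 ^ (2 * k) - 2 * 2 ^ (2 * k) + k + 2

def denPoly (k : ℕ) : ℝ := 2 * k * 2 ^ (2 * k) - 3 * 2 ^ (2 * k) + 4

def taylorA (k : ℕ) : ℝ := 4 * |(bernoulli (2 * k + 2) : ℝ)| / (2 * k + 2)! * numPoly k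

def taylorB (k : ℕ) : ℝ := 3 * |(bernoulli (2 * k) : ℝ)| / (2 * k)! * denPoly k

lemma taylorA_div_taylorB {k : ℕ} (hk : k ≠ 0) :
    taylorA k / taylorB k =
      zetaEven (k + 1) * numPoly k / (zetaEven k * denPoly k) / (3 * π ^ 2) := by
  rw [taylorA, taylorB, mul_div_assoc (4 : ℝ), mul_div_assoc (3 : ℝ),
    show 2 * k + 2 = 2 * (k + 1) by ring, abs_bernoulli_div_factorial hk,
    abs_bernoulli_div_factorial (k := k + 1) (by omega), mul_add, pow_add]
  have hζ0 := one_le_zetaEven hk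
  have hζ1 := one_le_zetaEven (k := k + 1) (by omega)
  field_simp
  ring

lemma four_mul_sq_le_four_pow (k : ℕ) : 4 * (k : ℝ) ^ 2 ≤ 4 ^ k := by
  have h : (2 * k) ^ 2 ≤ (2 ^ k) ^ 2 := Nat.pow_le_pow_left (Nat.mul_le_pow (by decide) k) 2
  calc 4 * (k : ℝ) ^ 2 = ((2 * k) ^ 2 : ℕ) := by push_cast; ring
    _ ≤ ((2 ^ k) ^ 2 : ℕ) := by exact_mod_cast h
    _ = 4 ^ k := by push_cast; rw [← pow_mul, mul_comm, pow_mul]; norm_num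

lemma two_pow_two_mul (k : ℕ) : (2 : ℝ) ^ (2 * k) = 4 ^ k := by
  rw [pow_mul]; norm_num

lemma numPoly_pos {k : ℕ} (hk : k ≠ 0) : 0 < numPoly k := by
  have hK : (1 : ℝ) ≤ k := by exact_mod_cast Nat.one_le_iff_ne_zero.2 hk
  have hx : (0 : ℝ) < 2 ^ (2 * k) := by positivity
  rw [numPoly]
  nlinarith

lemma denPoly_pos {k : ℕ} (hk : 2 ≤ k) : 0 < denPoly k := by
  have hK : (2 : ℝ) ≤ k := by exact_mod_cast hk
  have hx : (0 : ℝ) < 2 ^ (2 * k) := by positivity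
  rw [denPoly]
  nlinarith

lemma one_add_mul_numPoly_succ_mul_denPoly_lt {k : ℕ} (hk : 2 ≤ k) :
    (1 + 2 / 4 ^ k) * (numPoly (k + 1) * denPoly k) < numPoly k * denPoly (k + 1) := by
  have hK : (2 : ℝ) ≤ k := by exact_mod_cast hk
  have hx := four_mul_sq_le_four_pow k
  have hx16 : (16 : ℝ) ≤ 4 ^ k := by nlinarith
  simp only [numPoly, denPoly, two_pow_two_mul, pow_succ]
  push_cast
  set x : ℝ := 4 ^ k
  -- x P(k) Q(k+1) - (x + 2) P(k+1) Q(k)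
  --   = 8x²(x - 4k²) + (6k² + 33k - 7)x² - (4k² + 70k - 14)x - 8k - 24
  have h1 : 0 ≤ (x - 4 * k ^ 2) * x ^ 2 := mul_nonneg (by linarith) (sq_nonneg x)
  have h2 : 0 ≤ (x - 16) * x * (6 * k ^ 2 + 33 * k - 7) :=
    mul_nonneg (mul_nonneg (by linarith) (by linarith)) (by nlinarith)
  rw [one_add_div (by positivity), div_mul_eq_mul_div, div_lt_iff₀ (by positivity)]
  nlinarith

lemma zetaEven_add_two_mul_zetaEven_le {k : ℕ} (hk : 2 ≤ k) :
    zetaEven (k + 2) * zetaEven k ≤ (1 + 2 / 4 ^ k) * zetaEven (k + 1) ^ 2 := by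
  have h21 := zetaEven_succ_le (k := k + 1) (by omega)
  have h1 := one_le_zetaEven (k := k + 1) (by omega)
  have h0 := zetaEven_le hk
  have hζ0 := one_le_zetaEven (k := k) (by omega)
  calc zetaEven (k + 2) * zetaEven k ≤ zetaEven (k + 1) * (1 + 2 / 4 ^ k) :=
        mul_le_mul h21 h0 (by positivity) (by positivity)
    _ ≤ zetaEven (k + 1) * ((1 + 2 / 4 ^ k) * zetaEven (k + 1)) := by
        gcongr; exact le_mul_of_one_le_right (by positivity) h1
    _ = (1 + 2 / 4 ^ k) * zetaEven (k + 1) ^ 2 := by ring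

theorem taylorA_div_taylorB_succ_lt {k : ℕ} (hk : 2 ≤ k) :
    taylorA (k + 1) / taylorB (k + 1) < taylorA k / taylorB k := by
  rw [taylorA_div_taylorB (by omega), taylorA_div_taylorB (by omega)]
  have hζ0 := one_le_zetaEven (k := k) (by omega)
  have hζ1 := one_le_zetaEven (k := k + 1) (by omega)
  have hQ0 := denPoly_pos hk
  have hQ1 := denPoly_pos (k := k + 1) (by omega)
  have hP1 := numPoly_pos (k := k + 1) (by omega)
  gcongr ?_ / _
  rw [div_lt_div_iff₀ (by positivity) (by positivity)]
  calc zetaEven (k + 1 + 1) * numPoly (k + 1) * (zetaEven k * denPoly k)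
      = zetaEven (k + 2) * zetaEven k * (numPoly (k + 1) * denPoly k) := by ring
    _ ≤ (1 + 2 / 4 ^ k) * zetaEven (k + 1) ^ 2 * (numPoly (k + 1) * denPoly k) :=
        mul_le_mul_of_nonneg_right (zetaEven_add_two_mul_zetaEven_le hk) (by positivity)
    _ = zetaEven (k + 1) ^ 2 * ((1 + 2 / 4 ^ k) * (numPoly (k + 1) * denPoly k)) := by ring
    _ < zetaEven (k + 1) ^ 2 * (numPoly k * denPoly (k + 1)) :=
        mul_lt_mul_of_pos_left (one_add_mul_numPoly_succ_mul_denPoly_lt hk) (by positivity)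
    _ = zetaEven (k + 1) * numPoly k * (zetaEven (k + 1) * denPoly (k + 1)) := by ring

end

theorem c_strictly_decreasing (k : ℕ) (hk : 2 ≤ k) :
    (4 * |(bernoulli (2 * (k + 1) + 2) : ℝ)| / (Nat.factorial (2 * (k + 1) + 2)) *
        (2 * (k + 1) * 2 ^ (2 * (k + 1)) - 2 * 2 ^ (2 * (k + 1)) + (k + 1) + 2)) /
      (3 * |(bernoulli (2 * (k + 1)) : ℝ)| / (Nat.factorial (2 * (k + 1))) *
        (2 * (k + 1) * 2 ^ (2 * (k + 1)) - 3 * 2 ^ (2 * (k + 1)) + 4)) <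
    (4 * |(bernoulli (2 * k + 2) : ℝ)| / (Nat.factorial (2 * k + 2)) *
        (2 * k * 2 ^ (2 * k) - 2 * 2 ^ (2 * k) + k + 2)) /
      (3 * |(bernoulli (2 * k) : ℝ)| / (Nat.factorial (2 * k)) *
        (2 * k * 2 ^ (2 * k) - 3 * 2 ^ (2 * k) + 4)) := by
  have h := taylorA_div_taylorB_succ_lt hk
  simp only [taylorA, taylorB, numPoly, denPoly] at h
  exact_mod_cast h
end

section
/- For every positive integer k, the Bernoulli numbers satisfy the double inequality ((2^(2k−1) − 1)·(2k+1)·(2k+2)) / ((2^(2k+1) − 1)·π²) < |B_{2k+2}|/|B_{2k}| < ((2^(2k) − 1)·(2k+1)·(2k+2)) / ((2^(2k+2) − 1)·π²). -/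
/-!
Since `|B_{2k}| = 2 (2k)! ζ(2k) / (2π)^{2k}`, the ratio equals
`(2k+1)(2k+2) / (4π²) · ζ(2k+2) / ζ(2k)`, and both bounds are bounds on `ζ(s+2)/ζ(s)`.
The upper one says that `λ(s) = ∑ (2m+1)^{-s} = (1 - 2^{-s}) ζ(s)` decreases from `s` to `s+2`,
which is clear termwise. The lower one says that `η(s) = (1 - 2^{1-s}) ζ(s)` increases; grouping
`η(s) = 1 - ∑_{m ≥ 0} ((2m+2)^{-s} - (2m+3)^{-s})`, this follows because `x^{-s} - (x+1)^{-s}`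
decreases in `s ≥ 1` for `x ≥ 2`, which reduces to `x^{s+2} < (x-1)(x+1)^{s+1}`.
-/

open Real

/-- The `n = 0` term is `1 / 0 = 0`, so for `s > 1` this is `ζ(s)`, as in `hasSum_zeta_nat`. -/
noncomputable def zetaSum (s : ℕ) : ℝ := ∑' n : ℕ, 1 / (n : ℝ) ^ s

noncomputable def oddZetaSum (s : ℕ) : ℝ := ∑' m : ℕ, 1 / (2 * (m : ℝ) + 1) ^ s

lemma summable_one_div_two_mul_add_pow {s : ℕ} (hs : 1 < s) (c : ℕ) :
    Summable fun m : ℕ => 1 / (2 * (m : ℝ) + c) ^ s := by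
  have := (summable_one_div_nat_pow.2 hs).comp_injective
    (show Function.Injective (fun m : ℕ => 2 * m + c) from fun a b h => by simpa using h)
  simpa [Function.comp_def] using this

lemma zetaSum_eq_tsum_add_one {s : ℕ} (hs : 1 < s) :
    zetaSum s = ∑' n : ℕ, 1 / ((n : ℝ) + 1) ^ s := by
  rw [zetaSum, (summable_one_div_nat_pow.2 hs).tsum_eq_zero_add]
  simp [zero_pow (by omega : s ≠ 0)]

lemma tsum_one_div_two_mul_add_two_pow {s : ℕ} (hs : 1 < s) :
    ∑' m : ℕ, 1 / (2 * (m : ℝ) + 2) ^ s = zetaSum s / 2 ^ s := by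
  rw [zetaSum_eq_tsum_add_one hs, ← tsum_div_const]
  congr 1 with m
  rw [show 2 * (m : ℝ) + 2 = 2 * (m + 1) by ring, mul_pow]
  ring

lemma oddZetaSum_eq {s : ℕ} (hs : 1 < s) : oddZetaSum s = (1 - 1 / 2 ^ s) * zetaSum s := by
  have hsplit := tsum_even_add_odd (f := fun n : ℕ => 1 / ((n : ℝ) + 1) ^ s)
    (by simpa using summable_one_div_two_mul_add_pow hs 1)
    (by simpa [add_assoc, one_add_one_eq_two] using summable_one_div_two_mul_add_pow hs 2)
  push_cast at hsplit
  simp only [add_assoc, one_add_one_eq_two, tsum_one_div_two_mul_add_two_pow hs,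
    ← zetaSum_eq_tsum_add_one hs] at hsplit
  rw [oddZetaSum]
  linear_combination hsplit

lemma one_sub_tsum_eq_mul_zetaSum {s : ℕ} (hs : 1 < s) :
    1 - ∑' m : ℕ, (1 / (2 * (m : ℝ) + 2) ^ s - 1 / (2 * (m : ℝ) + 3) ^ s) =
      (1 - 2 / 2 ^ s) * zetaSum s := by
  have h1 : Summable fun m : ℕ => 1 / (2 * (m : ℝ) + 1) ^ s := by
    simpa using summable_one_div_two_mul_add_pow hs 1
  have h2 : Summable fun m : ℕ => 1 / (2 * (m : ℝ) + 2) ^ s := by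
    simpa using summable_one_div_two_mul_add_pow hs 2
  have h3 : Summable fun m : ℕ => 1 / (2 * (m : ℝ) + 3) ^ s := by
    simpa using summable_one_div_two_mul_add_pow hs 3
  have hodd : oddZetaSum s = 1 + ∑' m : ℕ, 1 / (2 * (m : ℝ) + 3) ^ s := by
    rw [oddZetaSum, h1.tsum_eq_zero_add]
    push_cast
    ring_nf
  rw [h2.tsum_sub h3, tsum_one_div_two_mul_add_two_pow hs]
  linear_combination oddZetaSum_eq hs - hodd

lemma pow_lt_sub_one_mul_add_one_pow {x : ℝ} (hx : 2 ≤ x) {s : ℕ} (hs : 1 ≤ s) :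
    x ^ (s + 2) < (x - 1) * (x + 1) ^ (s + 1) := by
  induction s, hs using Nat.le_induction with
  | base => norm_num; nlinarith
  | succ s _ ih =>
    have hpos : 0 ≤ (x - 1) * (x + 1) ^ (s + 1) := mul_nonneg (by linarith) (by positivity)
    calc x ^ (s + 1 + 2) = x * x ^ (s + 2) := by ring
      _ < x * ((x - 1) * (x + 1) ^ (s + 1)) := mul_lt_mul_of_pos_left ih (by linarith)
      _ ≤ (x + 1) * ((x - 1) * (x + 1) ^ (s + 1)) := by gcongr; linarith
      _ = (x - 1) * (x + 1) ^ (s + 1 + 1) := by ring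

lemma one_div_pow_sub_one_div_add_one_pow_succ_lt {x : ℝ} (hx : 2 ≤ x) {s : ℕ} (hs : 1 ≤ s) :
    1 / x ^ (s + 1) - 1 / (x + 1) ^ (s + 1) < 1 / x ^ s - 1 / (x + 1) ^ s := by
  have hx0 : 0 < x := by linarith
  have hx1 : 0 < x + 1 := by linarith
  have key : x / (x + 1) ^ (s + 1) < (x - 1) / x ^ (s + 1) := by
    rw [div_lt_div_iff₀ (by positivity) (by positivity)]
    calc x * x ^ (s + 1) = x ^ (s + 2) := by ring
      _ < (x - 1) * (x + 1) ^ (s + 1) := pow_lt_sub_one_mul_add_one_pow hx hs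
  have ex : 1 / x ^ s - 1 / x ^ (s + 1) = (x - 1) / x ^ (s + 1) := by
    field_simp; ring
  have ey : 1 / (x + 1) ^ s - 1 / (x + 1) ^ (s + 1) = x / (x + 1) ^ (s + 1) := by
    field_simp; ring
  linarith

lemma one_div_pow_sub_one_div_add_one_pow_lt {x : ℝ} (hx : 2 ≤ x) {s t : ℕ} (hs : 1 ≤ s)
    (hst : s < t) : 1 / x ^ t - 1 / (x + 1) ^ t < 1 / x ^ s - 1 / (x + 1) ^ s := by
  induction t, hst using Nat.le_induction with
  | base => exact one_div_pow_sub_one_div_add_one_pow_succ_lt hx hs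
  | succ t hst ih => exact (one_div_pow_sub_one_div_add_one_pow_succ_lt hx (by omega)).trans ih

lemma oddZetaSum_lt_oddZetaSum {s t : ℕ} (hs : 1 < s) (hst : s < t) :
    oddZetaSum t < oddZetaSum s := by
  refine Summable.tsum_lt_tsum (i := 1) (fun m => ?_) ?_
    (by simpa using summable_one_div_two_mul_add_pow (hs.trans hst) 1)
    (by simpa using summable_one_div_two_mul_add_pow hs 1)
  · exact one_div_le_one_div_of_le (by positivity)
      (pow_le_pow_right₀ (by linarith [(m.cast_nonneg : (0 : ℝ) ≤ m)]) hst.le)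
  · norm_num
    exact inv_strictAnti₀ (by positivity) (pow_lt_pow_right₀ (by norm_num) hst)

lemma tsum_one_div_pow_sub_lt_tsum {s t : ℕ} (hs : 1 < s) (hst : s < t) :
    ∑' m : ℕ, (1 / (2 * (m : ℝ) + 2) ^ t - 1 / (2 * (m : ℝ) + 3) ^ t) <
      ∑' m : ℕ, (1 / (2 * (m : ℝ) + 2) ^ s - 1 / (2 * (m : ℝ) + 3) ^ s) := by
  have hterm (m : ℕ) : 1 / (2 * (m : ℝ) + 2) ^ t - 1 / (2 * (m : ℝ) + 3) ^ t <
      1 / (2 * (m : ℝ) + 2) ^ s - 1 / (2 * (m : ℝ) + 3) ^ s := by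
    have h := one_div_pow_sub_one_div_add_one_pow_lt (x := 2 * (m : ℝ) + 2)
      (by linarith [(m.cast_nonneg : (0 : ℝ) ≤ m)]) hs.le hst
    rwa [show 2 * (m : ℝ) + 2 + 1 = 2 * m + 3 by ring] at h
  have hsum (r : ℕ) (hr : 1 < r) : Summable fun m : ℕ =>
      1 / (2 * (m : ℝ) + 2) ^ r - 1 / (2 * (m : ℝ) + 3) ^ r := by
    simpa using (summable_one_div_two_mul_add_pow hr 2).sub (summable_one_div_two_mul_add_pow hr 3)
  exact Summable.tsum_lt_tsum (fun m => (hterm m).le) (hterm 0) (hsum t (hs.trans hst)) (hsum s hs)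

lemma zetaSum_pos {s : ℕ} (hs : 1 < s) : 0 < zetaSum s :=
  (summable_one_div_nat_pow.2 hs).tsum_pos (fun n => by positivity) 1 (by norm_num)

lemma div_lt_zetaSum_add_two_div {s : ℕ} (hs : 1 < s) :
    (2 ^ (s + 1) - 4) / (2 ^ (s + 1) - 1) < zetaSum (s + 2) / zetaSum s := by
  have h := tsum_one_div_pow_sub_lt_tsum hs (lt_add_of_pos_right s two_pos)
  have heta : (1 - 2 / 2 ^ s) * zetaSum s < (1 - 2 / 2 ^ (s + 2)) * zetaSum (s + 2) := by
    rw [← one_sub_tsum_eq_mul_zetaSum hs, ← one_sub_tsum_eq_mul_zetaSum (by omega)]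
    linarith
  have h1 : (1 : ℝ) < 2 ^ (s + 1) := one_lt_pow₀ (by norm_num) (by omega)
  rw [div_lt_div_iff₀ (by linarith) (zetaSum_pos hs)]
  calc (2 ^ (s + 1) - 4) * zetaSum s = 2 ^ (s + 1) * ((1 - 2 / 2 ^ s) * zetaSum s) := by
        field_simp; ring
    _ < 2 ^ (s + 1) * ((1 - 2 / 2 ^ (s + 2)) * zetaSum (s + 2)) := by gcongr
    _ = zetaSum (s + 2) * (2 ^ (s + 1) - 1) := by field_simp; ring

lemma zetaSum_add_two_div_lt {s : ℕ} (hs : 1 < s) :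
    zetaSum (s + 2) / zetaSum s < (2 ^ (s + 2) - 4) / (2 ^ (s + 2) - 1) := by
  have h := oddZetaSum_lt_oddZetaSum hs (lt_add_of_pos_right s two_pos)
  rw [oddZetaSum_eq hs, oddZetaSum_eq (by omega)] at h
  have h1 : (1 : ℝ) < 2 ^ (s + 2) := one_lt_pow₀ (by norm_num) (by omega)
  rw [div_lt_div_iff₀ (zetaSum_pos hs) (by linarith)]
  calc zetaSum (s + 2) * (2 ^ (s + 2) - 1)
      = 2 ^ (s + 2) * ((1 - 1 / 2 ^ (s + 2)) * zetaSum (s + 2)) := by field_simp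
    _ < 2 ^ (s + 2) * ((1 - 1 / 2 ^ s) * zetaSum s) := by gcongr
    _ = (2 ^ (s + 2) - 4) * zetaSum s := by field_simp; ring

open Nat in
lemma abs_bernoulli_two_mul {k : ℕ} (hk : k ≠ 0) :
    |(bernoulli (2 * k) : ℝ)| = (2 * k)! * zetaSum (2 * k) / (2 ^ (2 * k - 1) * π ^ (2 * k)) := by
  have h := congrArg abs (hasSum_zeta_nat hk).tsum_eq
  rw [← zetaSum, abs_of_pos (zetaSum_pos (by omega))] at h
  simp only [abs_div, abs_mul, abs_pow, abs_neg, abs_one, one_pow, one_mul, abs_two,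
    abs_of_pos pi_pos, Nat.abs_cast] at h
  rw [h]
  field_simp

lemma abs_bernoulli_add_two_div {k : ℕ} (hk : k ≠ 0) :
    |(bernoulli (2 * k + 2) : ℝ)| / |(bernoulli (2 * k) : ℝ)| =
      (2 * k + 1) * (2 * k + 2) / (4 * π ^ 2) * (zetaSum (2 * k + 2) / zetaSum (2 * k)) := by
  have h2 : 2 * k + 2 = 2 * (k + 1) := by ring
  rw [h2, abs_bernoulli_two_mul hk, abs_bernoulli_two_mul k.succ_ne_zero, ← h2,
    show 2 * k + 2 - 1 = 2 * k - 1 + 2 by omega, Nat.factorial_succ, Nat.factorial_succ]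
  have hζ := zetaSum_pos (s := 2 * k) (by omega)
  have hζ' := zetaSum_pos (s := 2 * k + 2) (by omega)
  push_cast
  field_simp
  ring

theorem bernoulli_ratio_bounds (k : ℕ) (hk : 1 ≤ k) :
    (2 ^ (2 * k - 1) - 1) * (2 * k + 1) * (2 * k + 2) / ((2 ^ (2 * k + 1) - 1) * π ^ 2) <
      |(bernoulli (2 * k + 2) : ℝ)| / |(bernoulli (2 * k) : ℝ)| ∧
    |(bernoulli (2 * k + 2) : ℝ)| / |(bernoulli (2 * k) : ℝ)| <
      (2 ^ (2 * k) - 1) * (2 * k + 1) * (2 * k + 2) / ((2 ^ (2 * k + 2) - 1) * π ^ 2) := by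
  have hs : 1 < 2 * k := by omega
  have hc0 : 0 < (2 * k + 1) * (2 * k + 2) / (4 * π ^ 2) := by positivity
  rw [abs_bernoulli_add_two_div (by omega)]
  constructor
  · calc _ = (2 * k + 1) * (2 * k + 2) / (4 * π ^ 2) *
            ((2 ^ (2 * k + 1) - 4) / (2 ^ (2 * k + 1) - 1)) := by
          rw [show 2 * k + 1 = 2 * k - 1 + 2 by omega]
          field_simp
          ring
      _ < _ := mul_lt_mul_of_pos_left (div_lt_zetaSum_add_two_div hs) hc0
  · calc _ < (2 * k + 1) * (2 * k + 2) / (4 * π ^ 2) *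
            ((2 ^ (2 * k + 2) - 4) / (2 ^ (2 * k + 2) - 1)) :=
          mul_lt_mul_of_pos_left (zetaSum_add_two_div_lt hs) hc0
      _ = _ := by
          field_simp
          ring
end
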